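/- arXiv:2605.03424 — 14 statements merged into one kernel-verified Lean document; each statement's English description precedes it below -/
import Mathlib

section
/- For all integers r ≥ 2 and all integers n with 1 ≤ n ≤ r-1, the 2-adic valuation of the binomial coefficient C(r-1, n) plus n is at least v(r-1) + 1, where v denotes the 2-adic valuation. -/
/-! The identity `m * C(m - 1, n - 1) = C(m, n) * n` gives `v(m) ≤ v(C(m, n)) + v(n)`, and
`v(n) < n` because `2 ^ v(n) ≤ n`. -/

lemma padicValNat_lt_self (p : ℕ) {n : ℕ} (hn : n ≠ 0) : padicValNat p n < n :=
  (padicValNat_le_nat_log n).trans_lt (Nat.log_lt_self p hn)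

lemma padicValNat_le_padicValNat_choose_add {p : ℕ} [Fact p.Prime] {m n : ℕ} (hn : 0 < n)
    (hnm : n ≤ m) : padicValNat p m ≤ padicValNat p (m.choose n) + padicValNat p n := by
  obtain ⟨M, rfl⟩ : ∃ M, m = M + 1 := ⟨m - 1, by omega⟩
  obtain ⟨N, rfl⟩ : ∃ N, n = N + 1 := ⟨n - 1, by omega⟩
  have hchoose : M.choose N ≠ 0 := (Nat.choose_pos (by omega)).ne'
  have hchoose_succ : (M + 1).choose (N + 1) ≠ 0 := (Nat.choose_pos hnm).ne'
  calc padicValNat p (M + 1)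
      ≤ padicValNat p (M + 1) + padicValNat p (M.choose N) := Nat.le_add_right _ _
    _ = padicValNat p ((M + 1).choose (N + 1)) + padicValNat p (N + 1) := by
      rw [← padicValNat.mul M.succ_ne_zero hchoose, ← padicValNat.mul hchoose_succ N.succ_ne_zero,
        Nat.add_one_mul_choose_eq]

theorem stmt_0_general (r n : ℕ) (hn1 : 1 ≤ n) (hn2 : n ≤ r - 1) :
    padicValNat 2 (r - 1) + 1 ≤ padicValNat 2 ((r - 1).choose n) + n := by
  have hchoose := padicValNat_le_padicValNat_choose_add (p := 2) hn1 hn2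
  have hval := padicValNat_lt_self 2 (n := n) (by omega)
  omega

/-- For all integers `r ≥ 2` and all integers `n` with `1 ≤ n ≤ r - 1`, the 2-adic
valuation of `C(r-1, n)` plus `n` is at least `v(r-1) + 1`. -/
theorem stmt_0 (r n : ℕ) (hr : 2 ≤ r) (hn1 : 1 ≤ n) (hn2 : n ≤ r - 1) :
    padicValNat 2 (r - 1) + 1 ≤ padicValNat 2 ((r - 1).choose n) + n :=
  stmt_0_general r n hn1 hn2
end

section
/- For all integers r ≥ 3 and all integers n with 3 ≤ n ≤ r, the 2-adic valuation of the binomial coefficient C(r, n) plus n is at least v(r-1) + 2. -/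
/-!
The identity `r (r - 1) C(r - 2, n - 2) = C(r, n) n (n - 1)` gives
`v(r - 1) ≤ v(C(r, n)) + v(n (n - 1))`. Of the consecutive integers `n - 1` and `n` only one
is even, so `v(n (n - 1)) ≤ log₂ n`, and `log₂ n ≤ n - 2` as soon as `n ≥ 3`.
-/

theorem Nat.add_two_mul_add_one_mul_choose (m k : ℕ) :
    (m + 2) * (m + 1) * m.choose k = (m + 2).choose (k + 2) * ((k + 2) * (k + 1)) := by
  rw [mul_assoc, Nat.add_one_mul_choose_eq, ← mul_assoc, Nat.add_one_mul_choose_eq]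
  ring

theorem padicValNat_two_succ_mul_self_le_log (n : ℕ) :
    padicValNat 2 ((n + 1) * n) ≤ Nat.log 2 (n + 1) := by
  rcases Nat.eq_zero_or_pos n with rfl | hn
  · simp
  rw [padicValNat.mul n.succ_ne_zero hn.ne']
  rcases Nat.even_or_odd n with hev | hodd
  · have hsucc : padicValNat 2 (n + 1) = 0 :=
      padicValNat.eq_zero_of_not_dvd (Nat.not_even_iff_odd.mpr hev.add_one ∘ even_iff_two_dvd.mpr)
    rw [hsucc, zero_add]
    exact (padicValNat_le_nat_log n).trans (Nat.log_mono_right n.le_succ)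
  · have hself : padicValNat 2 n = 0 :=
      padicValNat.eq_zero_of_not_dvd (Nat.not_even_iff_odd.mpr hodd ∘ even_iff_two_dvd.mpr)
    rw [hself, add_zero]
    exact padicValNat_le_nat_log (n + 1)

theorem Nat.log_two_add_three_le (k : ℕ) : Nat.log 2 (k + 3) ≤ k + 1 := by
  refine Nat.lt_succ_iff.mp (Nat.log_lt_of_lt_pow (by omega) ?_)
  have := (k + 1).lt_two_pow_self
  rw [pow_succ]
  omega

theorem stmt_1_general (r n : ℕ) (hn1 : 3 ≤ n) (hn2 : n ≤ r) :
    padicValNat 2 (r - 1) + 2 ≤ padicValNat 2 (r.choose n) + n := by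
  obtain ⟨k, rfl⟩ : ∃ k, n = k + 3 := ⟨n - 3, by omega⟩
  obtain ⟨m, rfl⟩ : ∃ m, r = m + 2 := ⟨r - 2, by omega⟩
  have hchoose : m.choose (k + 1) ≠ 0 := (Nat.choose_pos (by omega)).ne'
  have hval : padicValNat 2 ((m + 2) * (m + 1) * m.choose (k + 1))
      = padicValNat 2 ((m + 2).choose (k + 3) * ((k + 3) * (k + 2))) :=
    congrArg _ (Nat.add_two_mul_add_one_mul_choose m (k + 1))
  rw [padicValNat.mul (by positivity) hchoose, padicValNat.mul (by positivity) (by positivity),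
    padicValNat.mul (Nat.choose_pos (by omega)).ne' (by positivity)] at hval
  have hconsec : padicValNat 2 ((k + 3) * (k + 2)) ≤ Nat.log 2 (k + 3) :=
    padicValNat_two_succ_mul_self_le_log (k + 2)
  have hlog := Nat.log_two_add_three_le k
  show padicValNat 2 (m + 1) + 2 ≤ _
  omega

/-- For all integers `r ≥ 3` and all integers `n` with `3 ≤ n ≤ r`, the 2-adic
valuation of `C(r, n)` plus `n` is at least `v(r-1) + 2`. -/
theorem stmt_1 (r n : ℕ) (hr : 3 ≤ r) (hn1 : 3 ≤ n) (hn2 : n ≤ r) :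
    padicValNat 2 (r - 1) + 2 ≤ padicValNat 2 (r.choose n) + n :=
  stmt_1_general r n hn1 hn2
end

section
/- For all integers r ≥ 3 and all integers j ≥ 3, the 2-adic valuation of C(r, j) plus j is at least v(r-2) + 2. -/
/-!
Multiplying `C(r, j)` by `j!` gives the falling factorial `r (r-1) ⋯ (r-j+1)`, which for `j ≥ 3`
contains `r (r-1) (r-2)` and is therefore divisible by `2 ^ (v(r-2) + 1)`. Legendre's formula
gives `v(j!) < j`, so passing from `j!` to `2 ^ j` gains at least one more factor of `2`.
-/

open Nat

lemma two_pow_padicValNat_sub_two_succ_dvd_descFactorial_three (r : ℕ) :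
    2 ^ (padicValNat 2 (r - 2) + 1) ∣ r.descFactorial 3 := by
  have hdesc : r.descFactorial 3 = (r - 2) * (r * (r - 1)) := by
    simp only [descFactorial_succ, descFactorial_zero, Nat.sub_zero]
    ring
  rw [hdesc, pow_succ]
  exact mul_dvd_mul pow_padicValNat_dvd (even_mul_pred_self r).two_dvd

lemma two_pow_padicValNat_sub_two_succ_dvd_descFactorial (r : ℕ) {j : ℕ} (hj : 3 ≤ j) :
    2 ^ (padicValNat 2 (r - 2) + 1) ∣ r.descFactorial j := by
  rw [← descFactorial_mul_descFactorial hj]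
  exact (two_pow_padicValNat_sub_two_succ_dvd_descFactorial_three r).mul_left _

lemma two_pow_succ_dvd_mul_two_pow_of_dvd_mul_factorial {a k j : ℕ} (hj : j ≠ 0)
    (h : 2 ^ k ∣ a * j !) : 2 ^ (k + 1) ∣ a * 2 ^ j := by
  rcases eq_or_ne a 0 with rfl | ha
  · simp
  rw [padicValNat_dvd_iff_le (mul_ne_zero ha (factorial_ne_zero j)),
    padicValNat.mul ha (factorial_ne_zero j)] at h
  rw [padicValNat_dvd_iff_le (mul_ne_zero ha (pow_ne_zero j two_ne_zero)),
    padicValNat.mul ha (pow_ne_zero j two_ne_zero), padicValNat.prime_pow]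
  have := padicValNat_factorial_lt_of_ne_zero 2 hj
  omega

theorem stmt_3_general (r j : ℕ) (hj : 3 ≤ j) :
    2 ^ (padicValNat 2 (r - 2) + 2) ∣ r.choose j * 2 ^ j := by
  apply two_pow_succ_dvd_mul_two_pow_of_dvd_mul_factorial (by omega)
  rw [mul_comm, ← descFactorial_eq_factorial_mul_choose]
  exact two_pow_padicValNat_sub_two_succ_dvd_descFactorial r hj

/-- For all integers `r ≥ 3` and all `j ≥ 3`, one has `v(C(r,j)) + j ≥ v(r-2) + 2`,
with the convention that `C(r,j) = 0` for `j > r` (so the inequality holds trivially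
in that case); equivalently, `2^(v(r-2)+2)` divides `C(r,j) * 2^j`. -/
theorem stmt_3 (r j : ℕ) (hr : 3 ≤ r) (hj : 3 ≤ j) :
    2 ^ (padicValNat 2 (r - 2) + 2) ∣ r.choose j * 2 ^ j :=
  stmt_3_general r j hj
end

section
/- For all integers r ≥ 4: (1) for all j ≥ 2, v(C(r-1, j)) + j ≥ v(r-2) + 1, and (2) for all j ≥ 1, v(C(r-2, j)) + j ≥ v(r-2) + 1. -/
/-!
From `(m + 1) * C(m, k) = C(m + 1, k + 1) * (k + 1)` we get `n ∣ C(n, j) * j`, so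
`v_p(n) ≤ v_p(C(n, j)) + v_p(j)`, and `v_p(j) < j` leaves room for the extra factor `p`.
For `C(r - 1, j)` one first splits by Pascal's rule into binomials of `r - 2`.
-/

namespace Nat

theorem self_dvd_choose_mul {n j : ℕ} (hj : j ≠ 0) : n ∣ n.choose j * j := by
  obtain ⟨k, rfl⟩ := exists_eq_succ_of_ne_zero hj
  rcases n with _ | m
  · simp
  · exact Dvd.intro _ (add_one_mul_choose_eq m k)

theorem pow_padicValNat_succ_dvd_choose_mul_pow (p : ℕ) [Fact p.Prime] (n j : ℕ)
    (hj : j ≠ 0) : p ^ (padicValNat p n + 1) ∣ n.choose j * p ^ j := by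
  rcases eq_or_ne (n.choose j) 0 with hc | hc
  · simp [hc]
  have hval : padicValNat p n ≤ padicValNat p (n.choose j) + padicValNat p j := by
    rw [← padicValNat.mul hc hj, ← padicValNat_dvd_iff_le (mul_ne_zero hc hj)]
    exact pow_padicValNat_dvd.trans (self_dvd_choose_mul hj)
  have hvj : padicValNat p j < j := (padicValNat_le_nat_log j).trans_lt (log_lt_self p hj)
  calc p ^ (padicValNat p n + 1)
      ∣ p ^ (padicValNat p (n.choose j) + j) := pow_dvd_pow p (by omega)
    _ = p ^ padicValNat p (n.choose j) * p ^ j := pow_add ..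
    _ ∣ n.choose j * p ^ j := mul_dvd_mul_right pow_padicValNat_dvd _

end Nat

theorem stmt_4_general (r : ℕ) :
    (∀ j : ℕ, 2 ≤ j →
      2 ^ (padicValNat 2 (r - 2) + 1) ∣ (r - 1).choose j * 2 ^ j) ∧
    (∀ j : ℕ, 1 ≤ j →
      2 ^ (padicValNat 2 (r - 2) + 1) ∣ (r - 2).choose j * 2 ^ j) := by
  have key j := Nat.pow_padicValNat_succ_dvd_choose_mul_pow 2 (r - 2) j
  refine ⟨fun j hj => ?_, fun j hj => key _ (by omega)⟩
  obtain ⟨k, rfl⟩ : ∃ k, j = k + 1 := ⟨j - 1, by omega⟩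
  rcases le_or_gt r 1 with hr | hr
  · simp [Nat.choose_eq_zero_of_lt (show r - 1 < k + 1 by omega)]
  rw [show r - 1 = r - 2 + 1 by omega, Nat.choose_succ_succ, add_mul, pow_succ 2 k, ← mul_assoc]
  exact dvd_add (dvd_mul_of_dvd_left (key _ (by omega)) 2) (key _ (by omega))

/-- For all integers `r ≥ 4`: (1) for all `j ≥ 2`, `v(C(r-1,j)) + j ≥ v(r-2) + 1`,
and (2) for all `j ≥ 1`, `v(C(r-2,j)) + j ≥ v(r-2) + 1`, with the convention
`C(n,j) = 0` for `j > n`; equivalently via divisibility by the corresponding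
power of two. -/
theorem stmt_4 (r : ℕ) (hr : 4 ≤ r) :
    (∀ j : ℕ, 2 ≤ j →
      2 ^ (padicValNat 2 (r - 2) + 1) ∣ (r - 1).choose j * 2 ^ j) ∧
    (∀ j : ℕ, 1 ≤ j →
      2 ^ (padicValNat 2 (r - 2) + 1) ∣ (r - 2).choose j * 2 ^ j) :=
  stmt_4_general r
end

section
/- Let r ≥ 5 and let S(X,Y) = Σ_{0≤j≤r} a_j X^{r-j} Y^j be a homogeneous polynomial of degree r over F̄₂. Then S lies in θ²·V_{r-6} if and only if a_0 = a_1 = a_{r-1} = a_r = 0, Σ_{j even} a_j = 0 and Σ_{j odd} a_j = 0 in F̄₂. -/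
/-!
Put `X = 1`, `Y = t`: a form `Σ a_j X^(r-j) Y^j` of degree `r` becomes `A = Σ a_j t^j`, and this
is Mathlib's `Polynomial.homogenize` read with the two variables swapped. In characteristic 2,
`θ² = X⁴Y² + X²Y⁴` becomes `t²(t² - 1)`, which is monic of degree 4. For `r ≥ 6`, injectivity of
`homogenize` in a fixed degree turns `S ∈ θ² V_{r-6}` into: `t²(t² - 1)` divides `A` and
`deg A ≤ r - 2`. Since `t²` and `t² - 1` are coprime, this means `t² ∣ A` (`a_0 = a_1 = 0`),
`a_{r-1} = a_r = 0` and `t² - 1 ∣ A`; the last holds iff both parity sums vanish, because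
`A ≡ Σ_{j even} a_j + t Σ_{j odd} a_j` modulo `t² - 1`.

For `r = 5` the truncated subtraction `r - 6 = 0` makes the right-hand side a form of degree 6,
so both sides vanish; the conditions also force `A = 0`, as `deg A ≤ 3 < 4`.
-/

open MvPolynomial Finset
open scoped Polynomial

namespace Polynomial

variable {R : Type*} [CommRing R]

noncomputable def ofCoeffs (n : ℕ) (a : ℕ → R) : R[X] :=
  ∑ j ∈ range (n + 1), C (a j) * X ^ j

theorem coeff_ofCoeffs (n : ℕ) (a : ℕ → R) (k : ℕ) :
    (ofCoeffs n a).coeff k = if k ≤ n then a k else 0 := by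
  simp [ofCoeffs, finsetSum_coeff]

theorem natDegree_ofCoeffs_le (n : ℕ) (a : ℕ → R) : (ofCoeffs n a).natDegree ≤ n :=
  natDegree_le_iff_coeff_eq_zero.2 fun k hk => by
    rw [coeff_ofCoeffs, if_neg hk.not_ge]

theorem ofCoeffs_coeff {p : R[X]} {n : ℕ} (hp : p.natDegree ≤ n) : ofCoeffs n p.coeff = p :=
  (as_sum_range_C_mul_X_pow' p (Nat.lt_succ_of_le hp)).symm

theorem X_sq_dvd_ofCoeffs_iff {n : ℕ} (hn : 1 ≤ n) (a : ℕ → R) :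
    X ^ 2 ∣ ofCoeffs n a ↔ a 0 = 0 ∧ a 1 = 0 := by
  rw [X_pow_dvd_iff]
  refine ⟨fun h => ⟨by simpa [coeff_ofCoeffs] using h 0 two_pos,
    by simpa [coeff_ofCoeffs, hn] using h 1 one_lt_two⟩, fun ⟨h0, h1⟩ d hd => ?_⟩
  interval_cases d <;> simp [coeff_ofCoeffs, h0, h1]

theorem natDegree_ofCoeffs_le_sub_two_iff {n : ℕ} (hn : 2 ≤ n) (a : ℕ → R) :
    (ofCoeffs n a).natDegree ≤ n - 2 ↔ a (n - 1) = 0 ∧ a n = 0 := by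
  simp only [natDegree_le_iff_coeff_eq_zero, coeff_ofCoeffs]
  refine ⟨fun h => ⟨by simpa [show n - 1 ≤ n by omega] using h (n - 1) (by omega),
    by simpa using h n (by omega)⟩, fun ⟨h1, h2⟩ k hk => ?_⟩
  split_ifs with hkn
  · obtain rfl | rfl : k = n - 1 ∨ k = n := by omega
    exacts [h1, h2]
  · rfl

theorem X_sq_sub_one_dvd_X_pow_sub_X_pow_mod_two (j : ℕ) :
    (X ^ 2 - 1 : R[X]) ∣ X ^ j - X ^ (j % 2) := by
  nth_rw 1 [← Nat.mod_add_div j 2]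
  rw [pow_add, pow_mul, ← mul_sub_one]
  exact dvd_mul_of_dvd_right (by simpa using sub_dvd_pow_sub_pow (X ^ 2 : R[X]) 1 (j / 2)) _

theorem sum_C_mul_X_pow_mod_two (s : Finset ℕ) (a : ℕ → R) :
    ∑ j ∈ s, C (a j) * X ^ (j % 2) =
      C (∑ j ∈ s.filter (· % 2 = 0), a j) + C (∑ j ∈ s.filter (· % 2 = 1), a j) * X := by
  rw [← sum_filter_add_sum_filter_not s (· % 2 = 0), map_sum, map_sum, sum_mul]
  congr 1
  · exact sum_congr rfl fun j hj => by simp [(mem_filter.1 hj).2]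
  · refine sum_congr (filter_congr fun j _ => Nat.mod_two_ne_zero) fun j hj => ?_
    simp [(mem_filter.1 hj).2]

theorem X_sq_sub_one_dvd_sum_C_mul_X_pow_iff [Nontrivial R] (s : Finset ℕ) (a : ℕ → R) :
    (X ^ 2 - 1 : R[X]) ∣ ∑ j ∈ s, C (a j) * X ^ j ↔
      ∑ j ∈ s.filter (· % 2 = 0), a j = 0 ∧ ∑ j ∈ s.filter (· % 2 = 1), a j = 0 := by
  set e := ∑ j ∈ s.filter (· % 2 = 0), a j
  set o := ∑ j ∈ s.filter (· % 2 = 1), a j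
  have hmonic : (X ^ 2 - 1 : R[X]).Monic := by monicity!
  have hsub : (X ^ 2 - 1 : R[X]) ∣ ∑ j ∈ s, C (a j) * X ^ j - (C e + C o * X) := by
    rw [← sum_C_mul_X_pow_mod_two, ← sum_sub_distrib]
    exact dvd_sum fun j _ => by
      rw [← mul_sub]; exact dvd_mul_of_dvd_right (X_sq_sub_one_dvd_X_pow_sub_X_pow_mod_two j) _
  have hdeg : (C e + C o * X).degree < (X ^ 2 - 1 : R[X]).degree := by
    rw [show (X ^ 2 - 1 : R[X]).degree = 2 by compute_degree!]
    exact (degree_add_le _ _).trans_lt (max_lt ((degree_C_le).trans_lt (by norm_num))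
      ((degree_C_mul_X_le _).trans_lt (by norm_num)))
  rw [← modByMonic_eq_zero_iff_dvd hmonic, modByMonic_eq_of_dvd_sub hmonic hsub,
    (modByMonic_eq_self_iff hmonic).2 hdeg]
  exact ⟨fun h => ⟨by simpa using congr_arg (coeff · 0) h, by simpa using congr_arg (coeff · 1) h⟩,
    fun ⟨he, ho⟩ => by simp [he, ho]⟩

theorem Monic.exists_eq_mul_ofCoeffs_iff {M A : R[X]} (hM : M.Monic) (s : ℕ) :
    (∃ b : ℕ → R, A = M * ofCoeffs s b) ↔ M ∣ A ∧ A.natDegree ≤ M.natDegree + s := by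
  refine ⟨fun ⟨b, hA⟩ => ⟨⟨_, hA⟩, hA ▸ natDegree_mul_le.trans
    (Nat.add_le_add_left (natDegree_ofCoeffs_le s b) _)⟩, ?_⟩
  rintro ⟨⟨B, rfl⟩, hdeg⟩
  have hB : B.natDegree ≤ s := by
    obtain rfl | hB := eq_or_ne B 0
    · simp
    · rw [hM.natDegree_mul' hB] at hdeg; omega
  exact ⟨B.coeff, by rw [ofCoeffs_coeff hB]⟩

theorem Monic.eq_zero_of_dvd_of_natDegree_lt {M A : R[X]} (hM : M.Monic) (h : M ∣ A)
    (hlt : A.natDegree < M.natDegree) : A = 0 :=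
  by_contra fun hA => hM.not_dvd_of_natDegree_lt hA hlt h

theorem monic_X_sq_mul_X_sq_sub_one : (X ^ 2 * (X ^ 2 - 1) : R[X]).Monic := by
  monicity!

theorem natDegree_X_sq_mul_X_sq_sub_one [Nontrivial R] :
    (X ^ 2 * (X ^ 2 - 1) : R[X]).natDegree = 4 := by
  compute_degree!

theorem X_sq_mul_X_sq_sub_one_dvd_ofCoeffs_and_natDegree_le_iff [Nontrivial R] {r : ℕ}
    (hr : 2 ≤ r) (a : ℕ → R) :
    (X ^ 2 * (X ^ 2 - 1) ∣ ofCoeffs r a ∧ (ofCoeffs r a).natDegree ≤ r - 2) ↔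
      a 0 = 0 ∧ a 1 = 0 ∧ a (r - 1) = 0 ∧ a r = 0 ∧
        ∑ j ∈ (range (r + 1)).filter (· % 2 = 0), a j = 0 ∧
        ∑ j ∈ (range (r + 1)).filter (· % 2 = 1), a j = 0 := by
  have hcop : IsCoprime (X ^ 2 : R[X]) (X ^ 2 - 1) := ⟨1, -1, by ring⟩
  have hdvd : X ^ 2 * (X ^ 2 - 1) ∣ ofCoeffs r a ↔
      X ^ 2 ∣ ofCoeffs r a ∧ X ^ 2 - 1 ∣ ofCoeffs r a :=
    ⟨fun h => ⟨(dvd_mul_right _ _).trans h, (dvd_mul_left _ _).trans h⟩,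
      fun ⟨h₁, h₂⟩ => hcop.mul_dvd h₁ h₂⟩
  rw [hdvd, X_sq_dvd_ofCoeffs_iff (by omega), natDegree_ofCoeffs_le_sub_two_iff hr, ofCoeffs,
    X_sq_sub_one_dvd_sum_C_mul_X_pow_iff]
  tauto

theorem homogenize_eq_homogenize_iff {p q : R[X]} {n : ℕ} (hp : p.natDegree ≤ n)
    (hq : q.natDegree ≤ n) : p.homogenize n = q.homogenize n ↔ p = q := by
  rw [← sub_eq_zero, ← homogenize_sub, homogenize_eq_zero_iff
    ((natDegree_sub_le p q).trans (max_le hp hq)), sub_eq_zero]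

theorem homogenize_eq_homogenize_iff_of_ne {p q : R[X]} {m n : ℕ} (hmn : m ≠ n)
    (hp : p.natDegree ≤ m) (hq : q.natDegree ≤ n) :
    p.homogenize m = q.homogenize n ↔ p = 0 ∧ q = 0 := by
  refine ⟨fun h => ?_, fun ⟨hp, hq⟩ => by simp [hp, hq]⟩
  have h0 : p.homogenize m = 0 := by
    by_contra h0
    exact hmn ((isHomogeneous_homogenize p).inj_right
      (h ▸ isHomogeneous_homogenize q) h0)
  exact ⟨(homogenize_eq_zero_iff hp).1 h0,
    (homogenize_eq_zero_iff hq).1 (h ▸ h0)⟩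

end Polynomial

section BinaryForms

variable {R : Type*} [CommRing R]

theorem sum_C_mul_X_pow_mul_X_pow_eq_rename_homogenize (r : ℕ) (a : ℕ → R) :
    ∑ j ∈ range (r + 1), C (a j) * X 0 ^ (r - j) * X 1 ^ j =
      rename (Equiv.swap 0 1) ((Polynomial.ofCoeffs r a).homogenize r) := by
  rw [Polynomial.ofCoeffs, Polynomial.homogenize_finsetSum, map_sum]
  refine sum_congr rfl fun j hj => ?_
  rw [Polynomial.homogenize_C_mul,
    Polynomial.homogenize_X_pow (by simpa [Nat.lt_succ_iff] using hj)]
  simp [mul_assoc, mul_comm]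

theorem theta_sq_eq_rename_homogenize [CharP R 2] :
    (X 0 ^ 2 * X 1 - X 0 * X 1 ^ 2 : MvPolynomial (Fin 2) R) ^ 2 =
      rename (Equiv.swap 0 1)
        ((Polynomial.X ^ 2 * (Polynomial.X ^ 2 - 1) : R[X]).homogenize 6) := by
  rw [show 6 = 2 + 4 from rfl,
    Polynomial.homogenize_mul _ _ (by compute_degree!) (by compute_degree!),
    Polynomial.homogenize_sub, Polynomial.homogenize_X_pow le_rfl,
    Polynomial.homogenize_X_pow (by norm_num), Polynomial.homogenize_one]
  simp only [tsub_self, pow_zero, mul_one, Nat.reduceSub, map_mul, map_pow, map_sub, rename_X,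
    Equiv.swap_apply_left, Equiv.swap_apply_right]
  linear_combination
    (X 0 ^ 4 * X 1 ^ 2 - X 0 ^ 3 * X 1 ^ 3) * CharTwo.two_eq_zero (R := MvPolynomial (Fin 2) R)

theorem sum_eq_theta_sq_mul_sum_iff [CharP R 2] (r s : ℕ) (a b : ℕ → R) :
    (∑ j ∈ range (r + 1), C (a j) * X 0 ^ (r - j) * X 1 ^ j : MvPolynomial (Fin 2) R) =
        (X 0 ^ 2 * X 1 - X 0 * X 1 ^ 2) ^ 2 *
          ∑ j ∈ range (s + 1), C (b j) * X 0 ^ (s - j) * X 1 ^ j ↔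
      (Polynomial.ofCoeffs r a).homogenize r =
        (Polynomial.X ^ 2 * (Polynomial.X ^ 2 - 1) * Polynomial.ofCoeffs s b).homogenize
          (s + 6) := by
  rw [sum_C_mul_X_pow_mul_X_pow_eq_rename_homogenize,
    sum_C_mul_X_pow_mul_X_pow_eq_rename_homogenize, theta_sq_eq_rename_homogenize, ← map_mul,
    add_comm s, ← Polynomial.homogenize_mul _ _ (by compute_degree!)
      (Polynomial.natDegree_ofCoeffs_le s b), (rename_injective _ (Equiv.injective _)).eq_iff]

end BinaryForms

/-- Let `r ≥ 5` and `S(X,Y) = Σ_{0 ≤ j ≤ r} a_j X^(r-j) Y^j` over `F̄₂`.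
Then `S ∈ θ²·V_{r-6}` (where `θ = X²Y - XY²`) iff
`a_0 = a_1 = a_{r-1} = a_r = 0`, `Σ_{j even} a_j = 0` and `Σ_{j odd} a_j = 0`. -/
theorem stmt_6 (r : ℕ) (hr : 5 ≤ r) (a : ℕ → AlgebraicClosure (ZMod 2)) :
    (∃ b : ℕ → AlgebraicClosure (ZMod 2),
      (∑ j ∈ Finset.range (r + 1), C (a j) * X 0 ^ (r - j) * X 1 ^ j :
          MvPolynomial (Fin 2) (AlgebraicClosure (ZMod 2)))
        = (X 0 ^ 2 * X 1 - X 0 * X 1 ^ 2) ^ 2 *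
            ∑ j ∈ Finset.range (r - 6 + 1), C (b j) * X 0 ^ (r - 6 - j) * X 1 ^ j)
    ↔ (a 0 = 0 ∧ a 1 = 0 ∧ a (r - 1) = 0 ∧ a r = 0 ∧
        ∑ j ∈ (Finset.range (r + 1)).filter (fun j => j % 2 = 0), a j = 0 ∧
        ∑ j ∈ (Finset.range (r + 1)).filter (fun j => j % 2 = 1), a j = 0) := by
  have hM := Polynomial.monic_X_sq_mul_X_sq_sub_one (R := AlgebraicClosure (ZMod 2))
  have hMB (b : ℕ → AlgebraicClosure (ZMod 2)) :
      (Polynomial.X ^ 2 * (Polynomial.X ^ 2 - 1) * Polynomial.ofCoeffs (r - 6) b).natDegree ≤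
        r - 6 + 6 := by
    have := Polynomial.natDegree_ofCoeffs_le (r - 6) b
    exact Polynomial.natDegree_mul_le.trans
      (by rw [Polynomial.natDegree_X_sq_mul_X_sq_sub_one]; omega)
  rw [← Polynomial.X_sq_mul_X_sq_sub_one_dvd_ofCoeffs_and_natDegree_le_iff (by omega)]
  simp_rw [sum_eq_theta_sq_mul_sum_iff]
  obtain rfl | ⟨s, rfl⟩ : r = 5 ∨ ∃ s, r = s + 6 :=
    (eq_or_ne r 5).imp id fun h => ⟨r - 6, by omega⟩
  · simp_rw [Polynomial.homogenize_eq_homogenize_iff_of_ne (by norm_num)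
      (Polynomial.natDegree_ofCoeffs_le 5 a) (hMB _)]
    refine ⟨fun ⟨_, hA, _⟩ => by simp [hA],
      fun ⟨hdvd, hdeg⟩ => ⟨0, ?_, by simp [Polynomial.ofCoeffs]⟩⟩
    exact hM.eq_zero_of_dvd_of_natDegree_lt hdvd
      (by rw [Polynomial.natDegree_X_sq_mul_X_sq_sub_one]; omega)
  · rw [Nat.add_sub_cancel] at hMB ⊢
    simp_rw [Polynomial.homogenize_eq_homogenize_iff
        (Polynomial.natDegree_ofCoeffs_le _ a) (hMB _), hM.exists_eq_mul_ofCoeffs_iff,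
      Polynomial.natDegree_X_sq_mul_X_sq_sub_one, show s + 6 - 2 = 4 + s by omega]
end

section
/- For r ≥ 1 odd, the polynomial H(X,Y) = Σ_{0<j<r} C(r,j) X^{r-j} Y^j over F̄₂ equals ((1 0;1 1)·X^r) - X^r - ((0 1;1 0)·X^r) and hence lies in the GL₂(F₂)-submodule of V_r generated by X^r; moreover all six elements of GL₂(F₂) fix the image of H in V_r^{(1)}/V_r^{(2)}. -/
open MvPolynomial

/-- The algebraic closure of `F₂`. -/
noncomputable abbrev Fbar2 : Type := AlgebraicClosure (ZMod 2)

/-- The action of a matrix `(a b; c d)` over `F₂` on polynomials in two variables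
over `F̄₂`, given by `f(X,Y) ↦ f(aX + cY, bX + dY)`. -/
noncomputable def matAct (g : Matrix (Fin 2) (Fin 2) (ZMod 2)) :
    MvPolynomial (Fin 2) Fbar2 →ₐ[Fbar2] MvPolynomial (Fin 2) Fbar2 :=
  aeval (fun j : Fin 2 => ∑ i : Fin 2,
    C (algebraMap (ZMod 2) Fbar2 (g i j)) * X i)

/-- `H(X,Y) = Σ_{0 < j < r} C(r,j) X^(r-j) Y^j` over `F̄₂`. -/
noncomputable def Hbar (r : ℕ) : MvPolynomial (Fin 2) Fbar2 :=
  ∑ j ∈ Finset.Ioo 0 r, C ((r.choose j : Fbar2)) * X 0 ^ (r - j) * X 1 ^ j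

/-!
By the binomial theorem `H = (X+Y)^r - X^r - Y^r`. Over `F₂` this is the sum of `ℓ_v^r` over all
`v ∈ F₂²`, where `ℓ_v = v₀X + v₁Y` (the zero form contributes `0^r = 0` as `r ≥ 1`). Since
`g · ℓ_v = ℓ_{gv}`, an invertible `g` only permutes the summands, so `g · H = H`.
-/

open Matrix

lemma add_pow_sub_pow_sub_pow {R : Type*} [CommRing R] (x y : R) {n : ℕ} (hn : 1 ≤ n) :
    (x + y) ^ n - x ^ n - y ^ n = ∑ j ∈ Finset.Ioo 0 n, x ^ (n - j) * y ^ j * n.choose j := by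
  rw [add_comm, add_pow, Finset.sum_range_succ, Finset.range_eq_Ico,
    Finset.sum_eq_sum_Ico_succ_bot (by omega), Finset.Ico_add_one_left_eq_Ioo]
  simp only [pow_zero, Nat.sub_zero, Nat.choose_zero_right, Nat.sub_self, Nat.choose_self]
  simp only [Nat.cast_one, mul_one, one_mul, mul_comm (y ^ _)]
  abel

lemma Hbar_eq_add_pow_sub {r : ℕ} (hr : 1 ≤ r) : Hbar r = (X 0 + X 1) ^ r - X 0 ^ r - X 1 ^ r := by
  rw [add_pow_sub_pow_sub_pow _ _ hr, Hbar]
  refine Finset.sum_congr rfl fun j _ => ?_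
  rw [← map_natCast C]
  ring

lemma sum_comp_mulVec {n K β : Type*} [Fintype n] [DecidableEq n] [CommRing K] [Fintype K]
    [AddCommMonoid β] (g : GL n K) (f : (n → K) → β) :
    ∑ v, f ((g : Matrix n n K) *ᵥ v) = ∑ v, f v := by
  have hsurj := mulVec_surjective_iff_isUnit.mpr g.isUnit
  exact Fintype.sum_bijective _ ⟨Finite.injective_iff_surjective.mpr hsurj, hsurj⟩ _ _ fun _ => rfl

lemma sum_zmod_two {β : Type*} [AddCommMonoid β] (f : ZMod 2 → β) : ∑ a, f a = f 0 + f 1 :=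
  Fin.sum_univ_two f

noncomputable def linForm (v : Fin 2 → ZMod 2) : MvPolynomial (Fin 2) Fbar2 :=
  ∑ i, C (algebraMap (ZMod 2) Fbar2 (v i)) * X i

lemma matAct_X (g : Matrix (Fin 2) (Fin 2) (ZMod 2)) (j : Fin 2) :
    matAct g (X j) = linForm (fun i => g i j) := by
  simp [matAct, linForm]

lemma matAct_linForm (g : Matrix (Fin 2) (Fin 2) (ZMod 2)) (v : Fin 2 → ZMod 2) :
    matAct g (linForm v) = linForm (g *ᵥ v) := by
  simp only [linForm, map_mul, algHom_C, matAct_X, mulVec, dotProduct, Fin.sum_univ_two,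
    map_add, algebraMap_eq]
  ring

noncomputable def linFormPowerSum (r : ℕ) : MvPolynomial (Fin 2) Fbar2 :=
  ∑ v, linForm v ^ r

lemma matAct_linFormPowerSum (g : GL (Fin 2) (ZMod 2)) (r : ℕ) :
    matAct (g : Matrix (Fin 2) (Fin 2) (ZMod 2)) (linFormPowerSum r) = linFormPowerSum r := by
  simp only [linFormPowerSum, map_sum, map_pow, matAct_linForm]
  exact sum_comp_mulVec g (linForm · ^ r)

lemma Hbar_eq_linFormPowerSum {r : ℕ} (hr : 1 ≤ r) : Hbar r = linFormPowerSum r := by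
  rw [Hbar_eq_add_pow_sub hr, CharTwo.sub_eq_add, CharTwo.sub_eq_add, linFormPowerSum,
    ← (finTwoArrowEquiv _).symm.sum_comp, Fintype.sum_prod_type]
  simp [sum_zmod_two, linForm, Fin.sum_univ_two, Nat.one_le_iff_ne_zero.mp hr]
  ring

lemma matAct_Hbar {r : ℕ} (hr : 1 ≤ r) (g : GL (Fin 2) (ZMod 2)) :
    matAct (g : Matrix (Fin 2) (Fin 2) (ZMod 2)) (Hbar r) = Hbar r := by
  rw [Hbar_eq_linFormPowerSum hr, matAct_linFormPowerSum]

theorem stmt_8_general (r : ℕ) (hr : 1 ≤ r) :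
    Hbar r = matAct !![1, 0; 1, 1] (X 0 ^ r) - X 0 ^ r - matAct !![0, 1; 1, 0] (X 0 ^ r)
    ∧ Hbar r ∈ Submodule.span Fbar2
        (Set.range fun g : GL (Fin 2) (ZMod 2) =>
          matAct (g : Matrix (Fin 2) (Fin 2) (ZMod 2)) (X 0 ^ r))
    ∧ ∀ g : GL (Fin 2) (ZMod 2), ∃ b : ℕ → Fbar2,
        matAct (g : Matrix (Fin 2) (Fin 2) (ZMod 2)) (Hbar r) - Hbar r
          = (X 0 ^ 2 * X 1 - X 0 * X 1 ^ 2) ^ 2 *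
              ∑ j ∈ Finset.range (r - 6 + 1), C (b j) * X 0 ^ (r - 6 - j) * X 1 ^ j := by
  have hH : Hbar r
      = matAct !![1, 0; 1, 1] (X 0 ^ r) - X 0 ^ r - matAct !![0, 1; 1, 0] (X 0 ^ r) := by
    simpa [matAct_X, linForm, Fin.sum_univ_two] using Hbar_eq_add_pow_sub hr
  have hspan (g : GL (Fin 2) (ZMod 2)) : matAct (g : Matrix (Fin 2) (Fin 2) (ZMod 2)) (X 0 ^ r)
      ∈ Submodule.span Fbar2 (Set.range fun g : GL (Fin 2) (ZMod 2) =>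
          matAct (g : Matrix (Fin 2) (Fin 2) (ZMod 2)) (X 0 ^ r)) :=
    Submodule.subset_span ⟨g, rfl⟩
  refine ⟨hH, ?_, fun g => ⟨0, by simp [matAct_Hbar hr g]⟩⟩
  rw [hH]
  refine sub_mem (sub_mem (hspan ⟨!![1, 0; 1, 1], !![1, 0; 1, 1], by decide, by decide⟩) ?_)
    (hspan ⟨!![0, 1; 1, 0], !![0, 1; 1, 0], by decide, by decide⟩)
  simpa [matAct_X, linForm, Fin.sum_univ_two] using hspan 1

/-- For `r ≥ 1` odd: `H = ((1 0;1 1)·X^r) - X^r - ((0 1;1 0)·X^r)`, hence `H` lies in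
the `GL₂(F₂)`-submodule of `V_r` generated by `X^r`; moreover every element of
`GL₂(F₂)` fixes the image of `H` in `V_r^{(1)}/V_r^{(2)}`, i.e. `g·H - H ∈ θ²V_{r-6}`. -/
theorem stmt_8 (r : ℕ) (hr : 1 ≤ r) (hodd : Odd r) :
    Hbar r = matAct !![1, 0; 1, 1] (X 0 ^ r) - X 0 ^ r - matAct !![0, 1; 1, 0] (X 0 ^ r)
    ∧ Hbar r ∈ Submodule.span Fbar2
        (Set.range fun g : GL (Fin 2) (ZMod 2) =>
          matAct (g : Matrix (Fin 2) (Fin 2) (ZMod 2)) (X 0 ^ r))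
    ∧ ∀ g : GL (Fin 2) (ZMod 2), ∃ b : ℕ → Fbar2,
        matAct (g : Matrix (Fin 2) (Fin 2) (ZMod 2)) (Hbar r) - Hbar r
          = (X 0 ^ 2 * X 1 - X 0 * X 1 ^ 2) ^ 2 *
              ∑ j ∈ Finset.range (r - 6 + 1), C (b j) * X 0 ^ (r - 6 - j) * X 1 ^ j :=
  stmt_8_general r hr
end

section
/- For r ≥ 1 even, the polynomial H(X,Y) = Σ_{0<j<r} C(r,j) X^{r-j} Y^j over F̄₂ lies in θ²·V_{r-6} (in particular H = 0 if r < 6), i.e. its coefficients satisfy a_0 = a_1 = a_{r-1} = a_r = 0 and both the even-index and odd-index coefficient sums vanish in F̄₂. -/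
/-!
For even `r = 2m` in characteristic 2, `(X + 1)^r = (X^2 + 1)^m`, so the dehomogenization
`H(X, 1) = (X + 1)^r - X^r - 1` is `Q(X^2)` with `Q = (X + 1)^m - X^m - 1` of degree `< m`.
Since `Q` vanishes at `0` and `1`, `X (X - 1) ∣ Q`, hence `X^2 (X^2 - 1) = (X^2 - X)^2` divides
`H(X, 1)`, whose degree is at most `r - 2`. Homogenizing, `(X^2 - X)^2` becomes `θ²` in degree 6
and the quotient becomes a form of degree `r - 6`. The coefficient conditions come from the same
identity: `C(r, j)` is the coefficient of `X^j` in `(X^2 + 1)^m`, so it vanishes for odd `j`, and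
the coefficients of `H` sum to `2^r - 2 = 0`.
-/

open MvPolynomial

theorem add_pow_sub_pow_sub_pow_eq_sum_Ioo {R : Type*} [CommRing R] {n : ℕ} (hn : n ≠ 0)
    (x y : R) :
    (x + y) ^ n - x ^ n - y ^ n =
      ∑ j ∈ Finset.Ioo 0 n, (n.choose j : R) * x ^ (n - j) * y ^ j := by
  obtain ⟨k, rfl⟩ := Nat.exists_eq_add_one_of_ne_zero hn
  rw [add_comm x, add_pow, Finset.sum_range_succ, Finset.sum_range_succ',
    ← Finset.Ico_add_one_left_eq_Ioo, Finset.sum_Ico_eq_sum_range]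
  simp only [Nat.choose_zero_right, Nat.choose_self, Nat.sub_self, Nat.sub_zero, pow_zero,
    Nat.cast_one, mul_one, one_mul, zero_add, Nat.add_sub_cancel]
  rw [add_sub_right_comm, add_sub_cancel_right, add_sub_cancel_right]
  exact Finset.sum_congr rfl fun i _ => by rw [add_comm 1]; ring

namespace Polynomial

variable {R : Type*} [CommRing R]

theorem natDegree_X_add_one_pow_sub_X_pow_sub_one_le (n : ℕ) :
    natDegree ((X + 1) ^ n - X ^ n - 1 : R[X]) ≤ n - 1 := by
  rcases eq_or_ne n 0 with rfl | hn
  · simp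
  have hsum := add_pow_sub_pow_sub_pow_eq_sum_Ioo hn (X : R[X]) 1
  rw [one_pow] at hsum
  rw [hsum]
  refine natDegree_sum_le_of_forall_le _ _ fun j hj => ?_
  rw [one_pow, mul_one, ← C_eq_natCast]
  exact (natDegree_C_mul_X_pow_le _ _).trans (by grind)

theorem homogenize_X_add_one_pow_sub (n : ℕ) :
    homogenize ((X + 1) ^ n - X ^ n - 1 : R[X]) n = (.X 0 + .X 1) ^ n - .X 0 ^ n - .X 1 ^ n := by
  apply homogenize_eq_of_isHomogeneous
  · refine ((?_ : IsHomogeneous _ n).sub (isHomogeneous_X_pow _ _)).sub (isHomogeneous_X_pow _ _)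
    simpa only [one_mul] using ((isHomogeneous_X R 0).add (isHomogeneous_X R 1)).pow n
  · simp

theorem homogenize_sq_X_sq_sub_X :
    homogenize ((X ^ 2 - X) ^ 2 : R[X]) 6 = (.X 0 ^ 2 * .X 1 - .X 0 * .X 1 ^ 2) ^ 2 := by
  apply homogenize_eq_of_isHomogeneous
  · exact (((isHomogeneous_X_pow 0 2).mul (isHomogeneous_X R 1)).sub
      ((isHomogeneous_X R 0).mul (isHomogeneous_X_pow 1 2))).pow 2
  · simp

theorem exists_homogenize_eq_mul [NoZeroDivisors R] {p q : R[X]} (hpq : p ∣ q) {m n : ℕ}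
    (hp : p.natDegree ≤ m) (hq : q.natDegree + m ≤ n + p.natDegree) :
    ∃ s : R[X], q.homogenize n = p.homogenize m * s.homogenize (n - m) := by
  obtain ⟨s, rfl⟩ := hpq
  by_cases hps : p = 0 ∨ s = 0
  · exact ⟨0, by rcases hps with rfl | rfl <;> simp⟩
  push Not at hps
  rw [natDegree_mul hps.1 hps.2] at hq
  obtain ⟨k, rfl⟩ : ∃ k, n = m + k := ⟨n - m, by omega⟩
  exact ⟨s, by rw [Nat.add_sub_cancel_left, homogenize_mul _ _ hp (by omega)]⟩

theorem homogenize_eq_sum_range (p : R[X]) (n : ℕ) :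
    p.homogenize n =
      ∑ j ∈ Finset.range (n + 1), .C (p.coeff (n - j)) * .X 0 ^ (n - j) * .X 1 ^ j := by
  rw [homogenize, ← Finset.Nat.sum_antidiagonal_swap,
    Finset.Nat.sum_antidiagonal_eq_sum_range_succ_mk]
  refine Finset.sum_congr rfl fun j _ => ?_
  rw [Prod.fst_swap, Prod.snd_swap, Finsupp.update_eq_add_single (by simp),
    MvPolynomial.monomial_single_add, ← MvPolynomial.C_mul_X_pow_eq_monomial]
  ring

section CharTwo

variable [CharP R 2]

theorem X_add_one_pow_two_mul (m : ℕ) :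
    (X + 1 : R[X]) ^ (2 * m) = expand R 2 ((X + 1) ^ m) := by
  rw [pow_mul, CharTwo.add_sq, one_pow, map_pow, map_add, expand_X, map_one]

theorem expand_X_add_one_pow_sub (m : ℕ) :
    expand R 2 ((X + 1) ^ m - X ^ m - 1) = (X + 1 : R[X]) ^ (2 * m) - X ^ (2 * m) - 1 := by
  rw [X_add_one_pow_two_mul, map_sub, map_sub, map_pow (expand R 2) X, expand_X, map_one,
    ← pow_mul]

theorem natDegree_X_add_one_pow_sub_le_of_even {n : ℕ} (hn : Even n) :
    natDegree ((X + 1) ^ n - X ^ n - 1 : R[X]) ≤ n - 2 := by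
  obtain ⟨m, rfl⟩ := hn.two_dvd
  rw [← expand_X_add_one_pow_sub, natDegree_expand]
  have := natDegree_X_add_one_pow_sub_X_pow_sub_one_le (R := R) m
  omega

theorem sq_X_sq_sub_X_dvd {n : ℕ} (hn : Even n) (hn0 : n ≠ 0) :
    (X ^ 2 - X) ^ 2 ∣ ((X + 1) ^ n - X ^ n - 1 : R[X]) := by
  obtain ⟨m, rfl⟩ := hn.two_dvd
  have hm : m ≠ 0 := by omega
  have hQ : X * (X - C 1) ∣ ((X + 1) ^ m - X ^ m - 1 : R[X]) :=
    IsCoprime.mul_dvd ⟨1, -1, by rw [C_1]; ring⟩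
      (X_dvd_iff.mpr (by simp [coeff_zero_eq_eval_zero, hm]))
      (dvd_iff_isRoot.mpr (by simp [CharTwo.add_self_eq_zero, CharTwo.sub_eq_add, hm]))
  have hexpand : (X ^ 2 - X : R[X]) ^ 2 = expand R 2 (X * (X - C 1)) := by
    simp only [map_mul, map_sub, expand_X, map_one]
    linear_combination (X ^ 2 - X ^ 3 : R[X]) * CharTwo.two_eq_zero (R := R[X])
  rw [hexpand, ← expand_X_add_one_pow_sub]
  exact _root_.map_dvd _ hQ

end CharTwo

end Polynomial

theorem CharTwo.natCast_choose_eq_zero_of_even_of_odd {R : Type*} [CommRing R] [CharP R 2]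
    {n k : ℕ} (hn : Even n) (hk : Odd k) : (n.choose k : R) = 0 := by
  obtain ⟨m, rfl⟩ := hn.two_dvd
  rw [← Polynomial.coeff_X_add_one_pow, Polynomial.X_add_one_pow_two_mul,
    Polynomial.coeff_expand two_pos, if_neg hk.not_two_dvd_nat]

theorem CharTwo.sum_Ioo_natCast_choose_eq_zero {R : Type*} [CommRing R] [CharP R 2] {n : ℕ}
    (hn : n ≠ 0) : ∑ j ∈ Finset.Ioo 0 n, (n.choose j : R) = 0 := by
  have htotal := add_pow_sub_pow_sub_pow_eq_sum_Ioo hn (1 : R) 1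
  simp only [one_pow, mul_one, CharTwo.add_self_eq_zero, zero_pow hn, CharTwo.sub_eq_add,
    zero_add] at htotal
  exact htotal.symm

/-- For `r ≥ 1` even, `H(X,Y) = Σ_{0<j<r} C(r,j) X^(r-j)Y^j` over `F̄₂` lies in
`θ²·V_{r-6}` (in particular `H = 0` if `r < 6`); equivalently its coefficients
satisfy `a_1 = a_{r-1} = 0` (and `a_0 = a_r = 0` by construction) and both the
even-index and odd-index coefficient sums vanish in `F̄₂`. -/
theorem stmt_9 (r : ℕ) (hr : 1 ≤ r) (heven : Even r) :
    (∃ b : ℕ → AlgebraicClosure (ZMod 2),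
      (∑ j ∈ Finset.Ioo 0 r, C ((r.choose j : AlgebraicClosure (ZMod 2))) *
          X 0 ^ (r - j) * X 1 ^ j :
        MvPolynomial (Fin 2) (AlgebraicClosure (ZMod 2)))
        = (X 0 ^ 2 * X 1 - X 0 * X 1 ^ 2) ^ 2 *
            ∑ j ∈ Finset.range (r - 6 + 1), C (b j) * X 0 ^ (r - 6 - j) * X 1 ^ j)
    ∧ ((r.choose 1 : AlgebraicClosure (ZMod 2)) = 0)
    ∧ ((r.choose (r - 1) : AlgebraicClosure (ZMod 2)) = 0)
    ∧ (∑ j ∈ (Finset.Ioo 0 r).filter (fun j => j % 2 = 0),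
        (r.choose j : AlgebraicClosure (ZMod 2)) = 0)
    ∧ (∑ j ∈ (Finset.Ioo 0 r).filter (fun j => j % 2 = 1),
        (r.choose j : AlgebraicClosure (ZMod 2)) = 0) := by
  have hr0 : r ≠ 0 := by omega
  have hodd : ∀ j, j % 2 = 1 → (r.choose j : AlgebraicClosure (ZMod 2)) = 0 := fun j hj =>
    CharTwo.natCast_choose_eq_zero_of_even_of_odd heven (Nat.odd_iff.mpr hj)
  refine ⟨?_, hodd 1 rfl, hodd (r - 1) (by grind),
    ?_, Finset.sum_eq_zero fun j hj => hodd j (Finset.mem_filter.mp hj).2⟩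
  · have hdeg := Polynomial.natDegree_X_add_one_pow_sub_le_of_even
      (R := AlgebraicClosure (ZMod 2)) heven
    have hdeg_theta : ((Polynomial.X ^ 2 - Polynomial.X) ^ 2 :
        Polynomial (AlgebraicClosure (ZMod 2))).natDegree = 4 := by compute_degree!
    obtain ⟨B, hB⟩ := Polynomial.exists_homogenize_eq_mul
      (Polynomial.sq_X_sq_sub_X_dvd heven hr0) (m := 6) (n := r) (by omega) (by grind)
    refine ⟨fun j => B.coeff (r - 6 - j), ?_⟩
    rw [← Polynomial.homogenize_eq_sum_range, ← Polynomial.homogenize_sq_X_sq_sub_X, ← hB,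
      Polynomial.homogenize_X_add_one_pow_sub, add_pow_sub_pow_sub_pow_eq_sum_Ioo hr0]
    simp only [map_natCast]
  · have hodd_part : ∑ j ∈ (Finset.Ioo 0 r).filter (fun j => ¬ j % 2 = 0),
        (r.choose j : AlgebraicClosure (ZMod 2)) = 0 :=
      Finset.sum_eq_zero fun j hj => hodd j (by grind)
    have hsplit := Finset.sum_filter_add_sum_filter_not (Finset.Ioo 0 r) (fun j => j % 2 = 0)
      (fun j => (r.choose j : AlgebraicClosure (ZMod 2)))
    rwa [hodd_part, add_zero, CharTwo.sum_Ioo_natCast_choose_eq_zero hr0] at hsplit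
end

section
/- Let r ≥ 2, t = v(r-1), δ(r) = 1 if r is even and 0 if r is odd, and F(X,Y) = Y^r - X^{r-1}Y. Then F(X, 2Y - X) ≡ 2δ(r)X^r + 2(r-1)X^{r-1}Y - 2r(r-1)X^{r-2}Y² modulo 2^{t+2}, coefficientwise. -/
/-!
Expand `(2Y - X)^r` binomially. The term of index `k ≥ 3` carries the coefficient `2^k C(r,k)`;
since `k(k-1) C(r,k) = r(r-1) C(r-2,k-2)` and `v(k(k-1)) ≤ k - 2`, its valuation is at least
`t + 2`. The terms with `k ≤ 2`, together with `-X^(r-1)(2Y - X)`, give the stated polynomial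
exactly when `r` is odd, and up to a multiple of `4 = 2^(t+2)` when `r` is even (then `t = 0`).
-/

open Finset MvPolynomial

theorem padicValNat_two_mul_add_one_lt {m : ℕ} (hm : 2 ≤ m) :
    padicValNat 2 (m * (m + 1)) < m := by
  have hpow : m + 1 < 2 ^ m := by
    obtain ⟨j, rfl⟩ : ∃ j, m = j + 2 := ⟨m - 2, by omega⟩
    have := Nat.lt_two_pow_self (n := j)
    rw [pow_add]
    omega
  have hlog : Nat.log 2 (m + 1) < m := Nat.log_lt_of_lt_pow (by omega) hpow
  rw [padicValNat.mul (by omega) (by omega)]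
  rcases Nat.even_or_odd m with heven | hodd
  · have : padicValNat 2 (m + 1) = 0 :=
      padicValNat.eq_zero_of_not_dvd (by simpa [← even_iff_two_dvd] using heven.add_one)
    rw [this, add_zero]
    exact (padicValNat_le_nat_log m).trans_lt ((Nat.log_mono_right (by omega)).trans_lt hlog)
  · have : padicValNat 2 m = 0 :=
      padicValNat.eq_zero_of_not_dvd (by simpa [← even_iff_two_dvd] using hodd)
    rw [this, zero_add]
    exact (padicValNat_le_nat_log _).trans_lt hlog

theorem pow_padicValNat_add_two_dvd_two_pow_mul_choose (n : ℕ) {k : ℕ} (hk : 3 ≤ k) :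
    2 ^ (padicValNat 2 (n + 1) + 2) ∣ 2 ^ k * (n + 2).choose k := by
  rcases lt_or_ge (n + 2) k with hlt | hle
  · simp [Nat.choose_eq_zero_of_lt hlt]
  obtain ⟨j, rfl⟩ : ∃ j, k = j + 2 := ⟨k - 2, by omega⟩
  have hchoose : (n + 2).choose (j + 2) ≠ 0 := (Nat.choose_pos hle).ne'
  have hid : (n + 2) * ((n + 1) * n.choose j) = (n + 2).choose (j + 2) * ((j + 1) * (j + 2)) := by
    rw [Nat.add_one_mul_choose_eq, ← mul_assoc, Nat.add_one_mul_choose_eq]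
    ring
  have hval : padicValNat 2 (n + 1) ≤
      padicValNat 2 ((n + 2).choose (j + 2)) + padicValNat 2 ((j + 1) * (j + 2)) := by
    rw [← padicValNat.mul hchoose (by positivity), ← hid,
      ← padicValNat_dvd_iff_le (hid ▸ mul_ne_zero hchoose (by positivity))]
    exact (pow_padicValNat_dvd.mul_right _).mul_left _
  have hsmall : padicValNat 2 ((j + 1) * (j + 2)) < j + 1 :=
    padicValNat_two_mul_add_one_lt (by omega)
  rw [padicValNat_dvd_iff_le (by positivity), padicValNat.mul (by positivity) hchoose,
    padicValNat.prime_pow]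
  omega

section CommRing

variable {R : Type*} [CommRing R]

theorem two_mul_sub_pow_eq (x y : R) (n : ℕ) :
    (2 * y - x) ^ (n + 2) = (-x) ^ (n + 2) + 2 * (n + 2) * y * (-x) ^ (n + 1)
      + 2 * (n + 2) * (n + 1) * y ^ 2 * (-x) ^ n
      + ∑ k ∈ Ico 3 (n + 3), ((2 ^ k * (n + 2).choose k : ℕ) : R) * y ^ k * (-x) ^ (n + 2 - k) := by
  have hchoose : (n + 2).choose 2 * 2 = (n + 2) * (n + 1) := by
    have := Nat.add_one_mul_choose_eq (n + 1) 1
    simp only [Nat.choose_one_right] at this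
    linarith
  have hchoose' : ((n + 2).choose 2 : R) * 2 = (n + 2) * (n + 1) := by
    simpa using congrArg (Nat.cast : ℕ → R) hchoose
  rw [sub_eq_add_neg, add_pow, ← sum_range_add_sum_Ico _ (by omega : 3 ≤ n + 3)]
  simp only [sum_range_succ, sum_range_zero, Nat.cast_mul, Nat.cast_pow, mul_pow]
  congr 1
  · simp only [Nat.sub_zero, Nat.choose_zero_right, Nat.choose_one_right, Nat.add_sub_cancel,
      Nat.cast_add, Nat.cast_ofNat, show n + 2 - 1 = n + 1 by omega]
    linear_combination 2 * y ^ 2 * (-x) ^ n * hchoose'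
  · exact sum_congr rfl fun k _ => by push_cast; ring

theorem two_pow_dvd_two_mul_sub_pow_sub (x y : R) (n : ℕ) :
    (2 : R) ^ (padicValNat 2 (n + 1) + 2) ∣
      (2 * y - x) ^ (n + 2) - x ^ (n + 1) * (2 * y - x)
        - (2 * (if Even (n + 2) then 1 else 0) * x ^ (n + 2) + 2 * (n + 1) * x ^ (n + 1) * y
          - 2 * (n + 2) * (n + 1) * x ^ n * y ^ 2) := by
  have htail : (2 : R) ^ (padicValNat 2 (n + 1) + 2) ∣
      ∑ k ∈ Ico 3 (n + 3), ((2 ^ k * (n + 2).choose k : ℕ) : R) * y ^ k * (-x) ^ (n + 2 - k) := by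
    refine dvd_sum fun k hk => (Dvd.dvd.mul_right ?_ _).mul_right _
    have := Nat.cast_dvd_cast (α := R)
      (pow_padicValNat_add_two_dvd_two_pow_mul_choose n (mem_Ico.1 hk).1)
    rwa [Nat.cast_pow, Nat.cast_ofNat] at this
  rw [two_mul_sub_pow_eq, add_sub_right_comm, add_sub_right_comm, dvd_add_left htail]
  rcases Nat.even_or_odd n with heven | hodd
  · have hval : padicValNat 2 (n + 1) = 0 :=
      padicValNat.eq_zero_of_not_dvd (by simpa [← even_iff_two_dvd] using heven.add_one)
    rw [hval, if_pos (heven.add even_two), (heven.add even_two).neg_pow, heven.add_one.neg_pow,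
      heven.neg_pow]
    exact ⟨(n + 2) * ((n + 1) * x ^ n * y ^ 2 - x ^ (n + 1) * y), by ring⟩
  · rw [if_neg (by simpa [parity_simps] using hodd), (hodd.add_even even_two).neg_pow,
      hodd.add_one.neg_pow, hodd.neg_pow]
    exact ⟨0, by ring⟩

end CommRing

/-- Let `r ≥ 2`, `t = v(r-1)`, `δ(r) = 1` if `r` even and `0` if `r` odd, and
`F(X,Y) = Y^r - X^(r-1)Y`. Then
`F(X, 2Y - X) ≡ 2δ(r)X^r + 2(r-1)X^(r-1)Y - 2r(r-1)X^(r-2)Y²` modulo `2^(t+2)`. -/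
theorem stmt_11 (r : ℕ) (hr : 2 ≤ r) :
    ∃ Q : MvPolynomial (Fin 2) ℤ,
      (2 * X 1 - X 0) ^ r - X 0 ^ (r - 1) * (2 * X 1 - X 0)
        = C (2 * (if Even r then (1 : ℤ) else 0)) * X 0 ^ r
          + C (2 * ((r : ℤ) - 1)) * X 0 ^ (r - 1) * X 1
          - C (2 * (r : ℤ) * ((r : ℤ) - 1)) * X 0 ^ (r - 2) * X 1 ^ 2
          + C ((2 : ℤ) ^ (padicValNat 2 (r - 1) + 2)) * Q := by
  obtain ⟨n, rfl⟩ : ∃ n, r = n + 2 := ⟨r - 2, by omega⟩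
  obtain ⟨Q, hQ⟩ := two_pow_dvd_two_mul_sub_pow_sub (X 0 : MvPolynomial (Fin 2) ℤ) (X 1) n
  refine ⟨Q, ?_⟩
  simp only [Nat.add_sub_cancel, show n + 2 - 1 = n + 1 by omega, map_mul, map_sub, map_pow,
    map_ofNat, map_natCast, apply_ite C, map_one, map_zero] at hQ ⊢
  push_cast
  linear_combination hQ
end

section
/- Let r ≥ 2, t = v(r-1), and H(X,Y) = Σ_{0<j<r} C(r,j) X^{r-j}Y^j ∈ Z[X,Y]. Then H(X, 2Y) ≡ 2rX^{r-1}Y + 2r(r-1)X^{r-2}Y² modulo 2^{t+2}; in particular H(X,2Y) ≡ 0 mod 4 when r is even. -/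
/-!
Expanding, `H(X, 2Y) = Σ_{0<j<r} C(r,j) 2^j X^(r-j) Y^j`, whose terms `j = 1, 2` are the two
displayed monomials. For `j ≥ 3` the identity `C(r,j) j (j-1) = r (r-1) C(r-2,j-2)` gives
`v(C(r,j)) ≥ t - v(j(j-1))`, and `2^v(j(j-1))` divides `j` or `j - 1`, so `v(j(j-1)) ≤ j - 2`;
hence `2^(t+2)` divides `C(r,j) 2^j`. For even `r` we have `t = 0` and both displayed
coefficients are multiples of `4`.
-/

open MvPolynomial

lemma two_pow_padicValNat_mul_sub_one_le {j : ℕ} (hj : 2 ≤ j) :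
    2 ^ padicValNat 2 (j * (j - 1)) ≤ j := by
  rw [padicValNat.mul (by omega) (by omega)]
  rcases Nat.even_or_odd j with ⟨k, hk⟩ | ⟨k, hk⟩
  · rw [padicValNat.eq_zero_of_not_dvd (show ¬ 2 ∣ j - 1 by omega), add_zero]
    exact Nat.le_of_dvd (by omega) pow_padicValNat_dvd
  · rw [padicValNat.eq_zero_of_not_dvd (show ¬ 2 ∣ j by omega), zero_add]
    exact (Nat.le_of_dvd (by omega) pow_padicValNat_dvd).trans (Nat.sub_le j 1)

lemma padicValNat_two_mul_sub_one_add_two_le {j : ℕ} (hj : 3 ≤ j) :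
    padicValNat 2 (j * (j - 1)) + 2 ≤ j := by
  have hpow : j < 2 ^ (j - 1) := by
    have h₁ : j - 2 < 2 ^ (j - 2) := Nat.lt_two_pow_self
    have h₂ : 2 ^ (j - 1) = 2 * 2 ^ (j - 2) := by rw [← pow_succ']; congr 1; omega
    omega
  have := (Nat.pow_lt_pow_iff_right one_lt_two).1
    ((two_pow_padicValNat_mul_sub_one_le (by omega)).trans_lt hpow)
  omega

lemma choose_mul_mul_sub_one (m i : ℕ) :
    (m + 2).choose (i + 2) * ((i + 2) * (i + 1)) = (m + 2) * ((m + 1) * m.choose i) := by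
  calc (m + 2).choose (i + 2) * ((i + 2) * (i + 1))
      = (m + 1 + 1).choose (i + 1 + 1) * (i + 1 + 1) * (i + 1) := by ring
    _ = (m + 2) * ((m + 1).choose (i + 1) * (i + 1)) := by
      rw [← Nat.add_one_mul_choose_eq]; ring
    _ = (m + 2) * ((m + 1) * m.choose i) := by rw [Nat.add_one_mul_choose_eq]

lemma sub_one_dvd_choose_mul_mul_sub_one (r : ℕ) {j : ℕ} (hj : 2 ≤ j) :
    r - 1 ∣ r.choose j * (j * (j - 1)) := by
  rcases Nat.lt_or_ge r 2 with hr | hr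
  · simp [Nat.choose_eq_zero_of_lt (hr.trans_le hj)]
  obtain ⟨m, rfl⟩ : ∃ m, r = m + 2 := ⟨r - 2, by omega⟩
  obtain ⟨i, rfl⟩ : ∃ i, j = i + 2 := ⟨j - 2, by omega⟩
  rw [show m + 2 - 1 = m + 1 by omega, show i + 2 - 1 = i + 1 by omega,
    choose_mul_mul_sub_one, mul_left_comm]
  exact dvd_mul_right _ _

lemma two_pow_dvd_choose_mul_two_pow (r : ℕ) {j : ℕ} (hj : 3 ≤ j) :
    2 ^ (padicValNat 2 (r - 1) + 2) ∣ r.choose j * 2 ^ j := by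
  rcases (r.choose j).eq_zero_or_pos with h | h
  · simp [h]
  have hdvd : 2 ^ padicValNat 2 (r - 1) ∣ r.choose j * (j * (j - 1)) :=
    pow_padicValNat_dvd.trans (sub_one_dvd_choose_mul_mul_sub_one r (by omega))
  rw [padicValNat_dvd_iff_le (Nat.mul_ne_zero h.ne' (Nat.mul_ne_zero (by omega) (by omega))),
    padicValNat.mul h.ne' (Nat.mul_ne_zero (by omega) (by omega))] at hdvd
  have := padicValNat_two_mul_sub_one_add_two_le hj
  calc 2 ^ (padicValNat 2 (r - 1) + 2) ∣ 2 ^ (padicValNat 2 (r.choose j) + j) :=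
        pow_dvd_pow 2 (by omega)
    _ = 2 ^ padicValNat 2 (r.choose j) * 2 ^ j := pow_add 2 _ _
    _ ∣ r.choose j * 2 ^ j := mul_dvd_mul_right pow_padicValNat_dvd _

lemma choose_two_mul_two_sq (r : ℕ) : (r.choose 2 : ℤ) * 2 ^ 2 = 2 * r * (r - 1) := by
  have h : 2 * r.choose 2 = r * (r - 1) := by
    rw [Nat.choose_two_right, Nat.mul_div_cancel' (Nat.even_mul_pred_self r).two_dvd]
  rcases Nat.eq_zero_or_pos r with rfl | hr
  · simp
  have := congrArg (Nat.cast : ℕ → ℤ) h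
  push_cast [Nat.cast_sub hr] at this
  linear_combination 2 * this

lemma C_mul_X_pow_mul_two_mul_X_pow {R σ : Type*} [CommRing R] (c : R) (a j : ℕ) (x y : σ) :
    C c * X x ^ a * (2 * X y) ^ j = C (c * 2 ^ j) * (X x ^ a * X y ^ j) := by
  rw [C_mul, mul_pow, map_pow, map_ofNat]
  ring

lemma C_two_pow_dvd_sum_sub (r : ℕ) (hr : 2 ≤ r) :
    C ((2 : ℤ) ^ (padicValNat 2 (r - 1) + 2)) ∣
      ∑ j ∈ Finset.Ioo 0 r, C ((r.choose j : ℤ)) * X 0 ^ (r - j) * (2 * X (1 : Fin 2)) ^ j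
        - C (2 * (r : ℤ)) * X 0 ^ (r - 1) * X 1
        - C (2 * (r : ℤ) * ((r : ℤ) - 1)) * X 0 ^ (r - 2) * X 1 ^ 2 := by
  have hlow : C ((r.choose 1 : ℤ)) * X 0 ^ (r - 1) * (2 * X (1 : Fin 2)) ^ 1
        + C ((r.choose 2 : ℤ)) * X 0 ^ (r - 2) * (2 * X 1) ^ 2
      = C (2 * (r : ℤ)) * X 0 ^ (r - 1) * X 1
        + C (2 * (r : ℤ) * ((r : ℤ) - 1)) * X 0 ^ (r - 2) * X 1 ^ 2 := by
    rw [C_mul_X_pow_mul_two_mul_X_pow, C_mul_X_pow_mul_two_mul_X_pow, choose_two_mul_two_sq,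
      Nat.choose_one_right, pow_one, mul_comm (r : ℤ) 2]
    ring
  rcases hr.eq_or_lt with rfl | hr
  · refine ⟨-X 1 ^ 2, ?_⟩
    rw [show Finset.Ioo 0 2 = {1} by decide, Finset.sum_singleton]
    norm_num
    ring
  have hIoo : Finset.Ioo 0 r = insert 1 (insert 2 (Finset.Ioo 2 r)) := by
    ext x
    simp only [Finset.mem_Ioo, Finset.mem_insert]
    omega
  have hsplit :
      ∑ j ∈ Finset.Ioo 0 r, C ((r.choose j : ℤ)) * X 0 ^ (r - j) * (2 * X (1 : Fin 2)) ^ j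
        - C (2 * (r : ℤ)) * X 0 ^ (r - 1) * X 1
        - C (2 * (r : ℤ) * ((r : ℤ) - 1)) * X 0 ^ (r - 2) * X 1 ^ 2
      = ∑ j ∈ Finset.Ioo 2 r, C ((r.choose j : ℤ)) * X 0 ^ (r - j) * (2 * X 1) ^ j := by
    rw [hIoo, Finset.sum_insert (by simp), Finset.sum_insert (by simp)]
    linear_combination hlow
  rw [hsplit]
  refine Finset.dvd_sum fun j hj => ?_
  rw [Finset.mem_Ioo] at hj
  rw [C_mul_X_pow_mul_two_mul_X_pow]
  have hcoeff := two_pow_dvd_choose_mul_two_pow r (j := j) (by omega)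
  exact (map_dvd C (by exact_mod_cast hcoeff)).mul_right _

/-- Let `r ≥ 2`, `t = v(r-1)`, `H(X,Y) = Σ_{0<j<r} C(r,j) X^(r-j)Y^j ∈ ℤ[X,Y]`.
Then `H(X, 2Y) ≡ 2rX^(r-1)Y + 2r(r-1)X^(r-2)Y²` modulo `2^(t+2)`; in particular
`H(X, 2Y) ≡ 0 mod 4` when `r` is even. -/
theorem stmt_12 (r : ℕ) (hr : 2 ≤ r) :
    (∃ Q : MvPolynomial (Fin 2) ℤ,
      ∑ j ∈ Finset.Ioo 0 r, C ((r.choose j : ℤ)) * X 0 ^ (r - j) * (2 * X 1) ^ j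
        = C (2 * (r : ℤ)) * X 0 ^ (r - 1) * X 1
          + C (2 * (r : ℤ) * ((r : ℤ) - 1)) * X 0 ^ (r - 2) * X 1 ^ 2
          + C ((2 : ℤ) ^ (padicValNat 2 (r - 1) + 2)) * Q)
    ∧ (Even r → ∃ Q : MvPolynomial (Fin 2) ℤ,
      ∑ j ∈ Finset.Ioo 0 r, C ((r.choose j : ℤ)) * X 0 ^ (r - j) * (2 * X 1) ^ j
        = C (4 : ℤ) * Q) := by
  obtain ⟨Q, hQ⟩ := C_two_pow_dvd_sum_sub r hr
  refine ⟨⟨Q, by rw [← hQ]; ring⟩, fun ⟨k, hk⟩ => ?_⟩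
  have ht : padicValNat 2 (r - 1) = 0 := padicValNat.eq_zero_of_not_dvd (by omega)
  have hr2 : (r : ℤ) = 2 * k := by omega
  rw [ht, zero_add, show (2 : ℤ) ^ 2 = 4 by norm_num] at hQ
  refine ⟨C (k : ℤ) * X 0 ^ (r - 1) * X 1
    + C ((k : ℤ) * (r - 1)) * X 0 ^ (r - 2) * X 1 ^ 2 + Q, ?_⟩
  have h₁ : (C (2 * (r : ℤ)) : MvPolynomial (Fin 2) ℤ) = C 4 * C (k : ℤ) := by
    rw [← C_mul]; exact congrArg C (by rw [hr2]; ring)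
  have h₂ : (C (2 * (r : ℤ) * ((r : ℤ) - 1)) : MvPolynomial (Fin 2) ℤ)
      = C 4 * C ((k : ℤ) * (r - 1)) := by
    rw [← C_mul]; exact congrArg C (by rw [hr2]; ring)
  linear_combination hQ + X 0 ^ (r - 1) * X 1 * h₁ + X 0 ^ (r - 2) * X 1 ^ 2 * h₂
end

section
/- Let r ≥ 3 and t = v(r-2). For H(X,Y) = Σ_{0<j<r} C(r,j)X^{r-j}Y^j we have, modulo 2^{t+2}: H(X,2Y) ≡ 2rX^{r-1}Y + 2rX^{r-2}Y² if r is even, and H(X,2Y) ≡ 2rX^{r-1}Y if r is odd (the latter congruence mod 2²). -/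
/-!
Expanding, `H(X, 2Y) = ∑ 2^j C(r,j) X^(r-j) Y^j`. The `j = 1` term is `2r X^(r-1) Y` and all
further terms are divisible by `4`, which settles odd `r`. For even `r` we have
`2^(t+1) ∣ r (r-2)`, so the `j = 2` coefficient `4 C(r,2) = 2r(r-1)` is `2r` modulo `2^(t+2)`.
For `3 ≤ j` the identity `C(r,j) C(j,3) = C(r,3) C(r-3,j-3)` gives
`v(C(r,j)) ≥ v(C(r,3)) - v(C(j,3))`; here `2^t ∣ C(r,3)` because `6 C(r,3) = r(r-1)(r-2)`,
and `v(C(j,3)) ≤ log₂ j ≤ j - 2`, so `2^(t+2) ∣ 2^j C(r,j)`.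
-/

open MvPolynomial

lemma lt_two_pow_sub_one {j : ℕ} (hj : 3 ≤ j) : j < 2 ^ (j - 1) := by
  obtain ⟨k, rfl⟩ : ∃ k, j = k + 3 := ⟨j - 3, by omega⟩
  have hk : k < 2 ^ k := Nat.lt_two_pow_self
  rw [show k + 3 - 1 = k + 2 by omega, pow_add]
  omega

lemma padicValNat_two_choose_three_le {j : ℕ} (hj : 3 ≤ j) :
    padicValNat 2 (j.choose 3) ≤ j - 2 := by
  rw [← Nat.factorization_def _ Nat.prime_two]
  have := Nat.log_lt_of_lt_pow (by omega) (lt_two_pow_sub_one hj)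
  have := Nat.factorization_choose_le_log (p := 2) (n := j) (k := 3)
  omega

lemma two_pow_padicValNat_sub_two_dvd_choose_three {r : ℕ} (hr : Even r) :
    2 ^ padicValNat 2 (r - 2) ∣ r.choose 3 := by
  have h6 : r * (r - 1) * (r - 2) = 2 * (3 * r.choose 3) := by
    have := Nat.descFactorial_eq_factorial_mul_choose r 3
    simp only [Nat.descFactorial, Nat.factorial, tsub_zero, mul_one, Nat.succ_eq_add_one,
      Nat.reduceAdd, zero_add, Nat.reduceMul] at this
    linarith
  have hdvd : 2 * 2 ^ padicValNat 2 (r - 2) ∣ 2 * (3 * r.choose 3) :=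
    h6 ▸ mul_dvd_mul (dvd_mul_of_dvd_left hr.two_dvd _) pow_padicValNat_dvd
  exact (Nat.Coprime.pow_left _ (by norm_num)).dvd_of_dvd_mul_left
    (Nat.dvd_of_mul_dvd_mul_left two_pos hdvd)

lemma two_pow_padicValNat_sub_two_add_two_dvd_two_pow_mul_choose {r j : ℕ} (hr : Even r)
    (hj : 3 ≤ j) :
    2 ^ (padicValNat 2 (r - 2) + 2) ∣ 2 ^ j * r.choose j := by
  rcases lt_or_ge r j with hrj | hjr
  · simp [Nat.choose_eq_zero_of_lt hrj]
  have hrj : r.choose j ≠ 0 := (Nat.choose_pos hjr).ne'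
  have hj3 : j.choose 3 ≠ 0 := (Nat.choose_pos hj).ne'
  have hr3 : r.choose 3 ≠ 0 := (Nat.choose_pos (hj.trans hjr)).ne'
  have hrj3 : (r - 3).choose (j - 3) ≠ 0 := (Nat.choose_pos (by omega)).ne'
  have hmul := congrArg (padicValNat 2) (Nat.choose_mul (n := r) hj)
  rw [padicValNat.mul hrj hj3, padicValNat.mul hr3 hrj3] at hmul
  have hle := (padicValNat_dvd_iff_le hr3).1 (two_pow_padicValNat_sub_two_dvd_choose_three hr)
  have hge := padicValNat_two_choose_three_le hj
  rw [padicValNat_dvd_iff_le (by positivity), padicValNat.mul (by positivity) hrj,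
    padicValNat.prime_pow]
  omega

lemma two_pow_padicValNat_sub_two_add_two_dvd_four_mul_choose_two_sub {r : ℕ} (hr : Even r)
    (h2 : 2 ≤ r) :
    (2 : ℤ) ^ (padicValNat 2 (r - 2) + 2) ∣ 2 ^ 2 * r.choose 2 - 2 * r := by
  have hchoose : (2 * r.choose 2 : ℤ) = r * (r - 1) := by
    have := Nat.descFactorial_eq_factorial_mul_choose r 2
    simp only [Nat.descFactorial, Nat.factorial, tsub_zero, mul_one, Nat.succ_eq_add_one,
      Nat.reduceAdd, zero_add] at this
    rw [← Nat.cast_ofNat, ← Nat.cast_mul, ← this]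
    push_cast [Nat.cast_sub (by omega : 1 ≤ r)]
    ring
  have hdvd : 2 * 2 ^ padicValNat 2 (r - 2) ∣ r * (r - 2) :=
    mul_dvd_mul hr.two_dvd pow_padicValNat_dvd
  have hdvd' := Int.natCast_dvd_natCast.2 hdvd
  push_cast [Nat.cast_sub h2] at hdvd'
  rw [show (2 : ℤ) ^ 2 * r.choose 2 - 2 * r = 2 * (r * (r - 2)) by
      linear_combination 2 * hchoose,
    pow_add, mul_comm, pow_two, mul_assoc]
  exact mul_dvd_mul_left 2 hdvd'

lemma exists_eq_add_mul_iff_dvd_sub {R : Type*} [CommRing R] {a b c : R} :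
    (∃ q, a = b + c * q) ↔ c ∣ a - b :=
  exists_congr fun _ => sub_eq_iff_eq_add'.symm

lemma sum_C_choose_mul_two_mul_pow (r : ℕ) (s : Finset ℕ) :
    ∑ j ∈ s, C ((r.choose j : ℤ)) * X 0 ^ (r - j) * (2 * X (1 : Fin 2)) ^ j
      = ∑ j ∈ s, C ((2 : ℤ) ^ j * r.choose j) * (X 0 ^ (r - j) * X 1 ^ j) := by
  refine Finset.sum_congr rfl fun j _ => ?_
  rw [map_mul, map_pow, map_ofNat, mul_pow]
  ring

lemma C_dvd_sum_C_mul {σ R ι : Type*} [CommSemiring R] {d : R} {s : Finset ι} {a : ι → R}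
    (p : ι → MvPolynomial σ R) (h : ∀ i ∈ s, d ∣ a i) :
    C d ∣ ∑ i ∈ s, C (a i) * p i :=
  Finset.dvd_sum fun i hi => (map_dvd C (h i hi)).mul_right _

/-- Let `r ≥ 3` and `t = v(r-2)`. For `H(X,Y) = Σ_{0<j<r} C(r,j)X^(r-j)Y^j`:
if `r` is even, `H(X,2Y) ≡ 2rX^(r-1)Y + 2rX^(r-2)Y²` modulo `2^(t+2)`, and
if `r` is odd, `H(X,2Y) ≡ 2rX^(r-1)Y` modulo `2²`. -/
theorem stmt_15 (r : ℕ) (hr : 3 ≤ r) :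
    (Even r → ∃ Q : MvPolynomial (Fin 2) ℤ,
      ∑ j ∈ Finset.Ioo 0 r, C ((r.choose j : ℤ)) * X 0 ^ (r - j) * (2 * X 1) ^ j
        = C (2 * (r : ℤ)) * X 0 ^ (r - 1) * X 1
          + C (2 * (r : ℤ)) * X 0 ^ (r - 2) * X 1 ^ 2
          + C ((2 : ℤ) ^ (padicValNat 2 (r - 2) + 2)) * Q)
    ∧ (Odd r → ∃ Q : MvPolynomial (Fin 2) ℤ,
      ∑ j ∈ Finset.Ioo 0 r, C ((r.choose j : ℤ)) * X 0 ^ (r - j) * (2 * X 1) ^ j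
        = C (2 * (r : ℤ)) * X 0 ^ (r - 1) * X 1 + C ((2 : ℤ) ^ 2) * Q) := by
  rw [← Finset.Ico_add_one_left_eq_Ioo, sum_C_choose_mul_two_mul_pow,
    Finset.sum_eq_sum_Ico_succ_bot (by omega)]
  simp only [exists_eq_add_mul_iff_dvd_sub, zero_add, Nat.reduceAdd, Nat.choose_one_right,
    pow_one]
  refine ⟨fun hev => ?_, fun _ => ?_⟩
  · rw [Finset.sum_eq_sum_Ico_succ_bot (by rcases hev with ⟨k, rfl⟩; omega)]
    have hchoose_two := map_dvd (C : ℤ →+* MvPolynomial (Fin 2) ℤ)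
      (two_pow_padicValNat_sub_two_add_two_dvd_four_mul_choose_two_sub hev (by omega))
    have htail : C ((2 : ℤ) ^ (padicValNat 2 (r - 2) + 2)) ∣
        ∑ j ∈ Finset.Ico 3 r,
          C ((2 : ℤ) ^ j * r.choose j) * (X 0 ^ (r - j) * X (1 : Fin 2) ^ j) :=
      C_dvd_sum_C_mul _ fun j hj => by
        exact_mod_cast Nat.cast_dvd_cast (α := ℤ)
          (two_pow_padicValNat_sub_two_add_two_dvd_two_pow_mul_choose hev (Finset.mem_Ico.1 hj).1)
    convert dvd_add (hchoose_two.mul_right (X 0 ^ (r - 2) * X 1 ^ 2)) htail using 1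
    rw [map_sub]
    ring
  · have htail : C ((2 : ℤ) ^ 2) ∣
        ∑ j ∈ Finset.Ico 2 r,
          C ((2 : ℤ) ^ j * r.choose j) * (X 0 ^ (r - j) * X (1 : Fin 2) ^ j) :=
      C_dvd_sum_C_mul _ fun j hj => dvd_mul_of_dvd_left (pow_dvd_pow 2 (Finset.mem_Ico.1 hj).1) _
    convert htail using 1
    ring
end

section
/- Let r ≥ 3 even and t = v(r-2). For H(X,Y) = Σ_{0<j<r} C(r,j)X^{r-j}Y^j, one has H(X, 2Y - X) ≡ -2X^r + 2rX^{r-1}Y - 2rX^{r-2}Y² modulo 2^{t+2}, coefficientwise. -/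
/-!
Since `(2Y - X) + X = 2Y` and `r` is even, the binomial theorem gives
`H(X, 2Y - X) = (2Y)^r - X^r - (X - 2Y)^r`. The terms of `(X - 2Y)^r` of degree at most two
in `Y` produce the stated main part up to `-2r(r-2) X^(r-2) Y^2`, which is divisible by
`2^(t+2)` because `2 ∣ r`. A term of degree `k ≥ 3` has coefficient `±2^k C(r,k)`, and
`C(r,k) k(k-1)(k-2) = r(r-1)(r-2) C(r-3,k-3)` together with
`v(k(k-1)(k-2)) ≤ v(k!) < k` gives `v(2^k C(r,k)) ≥ v(r) + v(r-2) + 1 ≥ t + 2`.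
-/

open MvPolynomial

theorem Nat.choose_mul_descFactorial {n k s : ℕ} (hsk : s ≤ k) :
    n.choose k * k.descFactorial s = n.descFactorial s * (n - s).choose (k - s) := by
  rw [descFactorial_eq_factorial_mul_choose, descFactorial_eq_factorial_mul_choose,
    mul_left_comm, choose_mul hsk, mul_assoc]

theorem padicValNat_descFactorial_lt_choose_add (p : ℕ) [Fact p.Prime] {n k s : ℕ}
    (hsk : s ≤ k) (hkn : k ≤ n) (hk : k ≠ 0) :
    padicValNat p (n.descFactorial s) < padicValNat p (n.choose k) + k := by
  have hval := congrArg (padicValNat p) (Nat.choose_mul_descFactorial (n := n) hsk)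
  rw [padicValNat.mul (Nat.choose_pos hkn).ne' (Nat.descFactorial_pos.mpr hsk).ne',
    padicValNat.mul (Nat.descFactorial_pos.mpr (hsk.trans hkn)).ne'
      (Nat.choose_pos (by omega)).ne'] at hval
  have hdesc : padicValNat p (k.descFactorial s) ≤ padicValNat p k.factorial :=
    padicValNat_dvd_iff_le k.factorial_ne_zero |>.mp <|
      (pow_padicValNat_dvd).trans (Dvd.intro_left _ (Nat.factorial_mul_descFactorial hsk))
  have hfact := padicValNat_factorial_lt_of_ne_zero p hk
  omega

theorem two_pow_padicValNat_sub_two_add_two_dvd {r k : ℕ} (heven : Even r)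
    (hk : 3 ≤ k) (hkr : k ≤ r) :
    2 ^ (padicValNat 2 (r - 2) + 2) ∣ 2 ^ k * r.choose k := by
  set t := padicValNat 2 (r - 2)
  have hdesc : 2 ^ (t + 1) ∣ r.descFactorial 3 := by
    have hr2 : 2 ^ t ∣ r - 2 := pow_padicValNat_dvd
    have hdesc_eq : r.descFactorial 3 = r * (r - 2) * (r - 1) := by
      simp only [Nat.descFactorial, Nat.sub_zero]; ring
    rw [hdesc_eq, pow_succ']
    exact Dvd.dvd.mul_right (mul_dvd_mul heven.two_dvd hr2) _
  have hle := (padicValNat_dvd_iff_le (Nat.descFactorial_pos.mpr (by omega)).ne').mp hdesc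
  have hlt := padicValNat_descFactorial_lt_choose_add 2 hk hkr (by omega)
  have hchoose_ne := (Nat.choose_pos hkr).ne'
  rw [padicValNat_dvd_iff_le (by positivity), padicValNat.mul (by positivity) hchoose_ne,
    padicValNat.prime_pow]
  omega

theorem Even.two_pow_padicValNat_sub_two_add_two_dvd_mul {r : ℕ} (heven : Even r) :
    2 ^ (padicValNat 2 (r - 2) + 2) ∣ 2 * r * (r - 2) := by
  rw [pow_add, mul_comm, sq]
  exact mul_dvd_mul (mul_dvd_mul_left 2 heven.two_dvd) pow_padicValNat_dvd

section BinomialSums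

variable {R : Type*}

theorem sum_Ioo_choose_mul_pow_add_pow_add_pow [CommSemiring R] (a b : R) {n : ℕ} (hn : n ≠ 0) :
    ∑ j ∈ Finset.Ioo 0 n, (n.choose j : R) * b ^ (n - j) * a ^ j + a ^ n + b ^ n = (a + b) ^ n := by
  have hrange : Finset.range (n + 1) = insert 0 (insert n (Finset.Ioo 0 n)) := by
    ext m; simp; omega
  rw [add_pow, hrange, Finset.sum_insert (by simp; omega), Finset.sum_insert (by simp)]
  simp only [pow_zero, Nat.sub_zero, Nat.sub_self, Nat.choose_self, Nat.choose_zero_right,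
    Nat.cast_one, one_mul, mul_one]
  ring_nf

theorem add_pow_add_three [CommSemiring R] (x y : R) (n : ℕ) :
    (x + y) ^ (n + 3) = x ^ (n + 3) + (n + 3) * x ^ (n + 2) * y
      + ((n + 3).choose 2 : R) * x ^ (n + 1) * y ^ 2
      + ∑ i ∈ Finset.range (n + 1), ((n + 3).choose (i + 3) : R) * x ^ (n - i) * y ^ (i + 3) := by
  rw [add_comm x, add_pow, Finset.sum_range_succ', Finset.sum_range_succ', Finset.sum_range_succ']
  simp only [Nat.add_sub_add_right, zero_add, Nat.choose_zero_right, Nat.choose_one_right,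
    Nat.sub_zero]
  push_cast
  ring_nf

theorem sum_Ioo_choose_mul_pow_two_mul_sub_eq [CommRing R] (x y : R) {n : ℕ}
    (heven : Even (n + 3)) :
    ∑ j ∈ Finset.Ioo 0 (n + 3), ((n + 3).choose j : R) * x ^ (n + 3 - j) * (2 * y - x) ^ j
      = -(2 * x ^ (n + 3)) + 2 * (n + 3) * x ^ (n + 2) * y - 2 * (n + 3) * x ^ (n + 1) * y ^ 2
        + (2 ^ (n + 3) * y ^ (n + 3) - 2 * (n + 3) * (n + 1) * x ^ (n + 1) * y ^ 2
          - ∑ i ∈ Finset.range (n + 1),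
              ((n + 3).choose (i + 3) : R) * x ^ (n - i) * (-(2 * y)) ^ (i + 3)) := by
  have hchoose_two : ((n + 3).choose 2 : R) * 2 = (n + 3) * (n + 2) := by
    have h : (n + 3).choose 2 * 2 = (n + 3) * (n + 2) := by
      rw [← Nat.choose_one_right (n + 2)]
      exact (Nat.add_one_mul_choose_eq (n + 2) 1).symm
    exact_mod_cast congrArg (Nat.cast : ℕ → R) h
  have hsum := sum_Ioo_choose_mul_pow_add_pow_add_pow (2 * y - x) x (n := n + 3) (by omega)
  rw [show 2 * y - x + x = 2 * y by ring, ← heven.neg_pow (2 * y - x),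
    show -(2 * y - x) = x + -(2 * y) by ring, add_pow_add_three] at hsum
  linear_combination hsum - 2 * x ^ (n + 1) * y ^ 2 * hchoose_two

theorem two_pow_dvd_sum_choose_mul_pow_two_mul_sub_sub [CommRing R] (x y : R)
    {r : ℕ} (hr : 3 ≤ r) (heven : Even r) :
    (2 : R) ^ (padicValNat 2 (r - 2) + 2) ∣
      ∑ j ∈ Finset.Ioo 0 r, (r.choose j : R) * x ^ (r - j) * (2 * y - x) ^ j
        - (-(2 * x ^ r) + 2 * r * x ^ (r - 1) * y - 2 * r * x ^ (r - 2) * y ^ 2) := by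
  obtain ⟨n, rfl⟩ : ∃ n, r = n + 3 := ⟨r - 3, by omega⟩
  have hchoose : ∀ k, 3 ≤ k → k ≤ n + 3 →
      (2 : R) ^ (padicValNat 2 (n + 3 - 2) + 2) ∣ 2 ^ k * ((n + 3).choose k : R) :=
    fun k hk hkr => by
      exact_mod_cast Nat.cast_dvd_cast (two_pow_padicValNat_sub_two_add_two_dvd heven hk hkr)
  have hmid : (2 : R) ^ (padicValNat 2 (n + 3 - 2) + 2) ∣ 2 * (n + 3) * (n + 1) := by
    exact_mod_cast Nat.cast_dvd_cast heven.two_pow_padicValNat_sub_two_add_two_dvd_mul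
  rw [sum_Ioo_choose_mul_pow_two_mul_sub_eq x y heven]
  simp only [Nat.cast_add, Nat.cast_ofNat, show n + 3 - 1 = n + 2 from rfl,
    show n + 3 - 2 = n + 1 from rfl, add_sub_cancel_left]
  refine dvd_sub (dvd_sub ?_ ((hmid.mul_right _).mul_right _)) (Finset.dvd_sum fun i hi => ?_)
  · simpa using (hchoose _ hr le_rfl).mul_right (y ^ (n + 3))
  rw [neg_pow, mul_pow, show ((n + 3).choose (i + 3) : R) * x ^ (n - i) * ((-1) ^ (i + 3) *
      (2 ^ (i + 3) * y ^ (i + 3))) = 2 ^ (i + 3) * (n + 3).choose (i + 3) *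
        ((-1) ^ (i + 3) * y ^ (i + 3) * x ^ (n - i)) by ring]
  exact (hchoose _ (by omega) (by simp at hi; omega)).mul_right _

end BinomialSums

/-- Let `r ≥ 3` be even and `t = v(r-2)`. For `H(X,Y) = Σ_{0<j<r} C(r,j)X^(r-j)Y^j`,
one has `H(X, 2Y - X) ≡ -2X^r + 2rX^(r-1)Y - 2rX^(r-2)Y²` modulo `2^(t+2)`. -/
theorem stmt_16 (r : ℕ) (hr : 3 ≤ r) (heven : Even r) :
    ∃ Q : MvPolynomial (Fin 2) ℤ,
      ∑ j ∈ Finset.Ioo 0 r, C ((r.choose j : ℤ)) * X 0 ^ (r - j) * (2 * X 1 - X 0) ^ j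
        = -(C (2 : ℤ) * X 0 ^ r)
          + C (2 * (r : ℤ)) * X 0 ^ (r - 1) * X 1
          - C (2 * (r : ℤ)) * X 0 ^ (r - 2) * X 1 ^ 2
          + C ((2 : ℤ) ^ (padicValNat 2 (r - 2) + 2)) * Q := by
  obtain ⟨Q, hQ⟩ := two_pow_dvd_sum_choose_mul_pow_two_mul_sub_sub
    (X 0 : MvPolynomial (Fin 2) ℤ) (X 1) hr heven
  refine ⟨Q, ?_⟩
  simp only [map_natCast, map_mul, map_pow, map_ofNat]
  linear_combination hQ
end

section
/- Let r ≥ 6 be even, t = v(r-2), and K(X,Y) = Σ_{j=3}^{r-3} [C(r-1,j) + C(r-2,j)] X^{r-j}Y^j. Then modulo 2^{t+1}: K(X,2Y) ≡ 0, K(2X,Y) ≡ 0, and K(X, 2Y - X) ≡ -rX^r - 4X^{r-1}Y, all coefficientwise. -/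
/-!
Write `r = m + 2`, so `2^t ∣ m`. The key fact is `2^(t+1) ∣ 2^k C(m, k)` for `k ≥ 1`, from
`k C(m, k) = m C(m-1, k-1)` and `v(k) < k`; by Pascal it gives `2^(t+1) ∣ 2^k C(m+1, k)`
for `k ≥ 2`.
After `Y ↦ 2Y`, or `X ↦ 2X` combined with `C(n, j) = C(n, n-j)`, every term of `K` carries such a
factor. For `Y ↦ 2Y - X`, the sum over all `j` is `X (2Y)^(m+1) + X^2 (2Y)^m ≡ 0`, so `K` is minus
the terms with `j ∈ {0, 1, 2, m, m+1}`, and these are computed from `(-X + 2Y)^m ≡ X^m`,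
`(-X + 2Y)^(m+1) ≡ -X^(m+1) + 2(m+1) X^m Y`, `2m ≡ 0` and `C(m+1, 2) + C(m, 2) = m^2 ≡ 0`.
The congruences are proved as identities in a commutative ring where `2^(t+1) = 0`, and transferred
to `ℤ[X, Y]` through the quotient by `2^(t+1)`.
-/

open MvPolynomial Finset

theorem Nat.two_pow_succ_dvd_two_pow_mul_choose {t m k : ℕ} (hm : 2 ^ t ∣ m) (hk : 1 ≤ k) :
    2 ^ (t + 1) ∣ 2 ^ k * m.choose k := by
  obtain ⟨a, o, ho, rfl⟩ := Nat.exists_eq_two_pow_mul_odd (n := k) (by omega)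
  have hmul : m ∣ m.choose (2 ^ a * o) * (2 ^ a * o) := by
    simpa only [Nat.choose_one_right] using Dvd.intro _ (Nat.choose_mul (n := m) hk).symm
  have hdvd : 2 ^ t ∣ m.choose (2 ^ a * o) * 2 ^ a :=
    (Nat.Coprime.pow_left t (Nat.coprime_two_left.2 ho)).dvd_of_dvd_mul_right
      (by simpa only [mul_assoc] using hm.trans hmul)
  have ha : a + 1 ≤ 2 ^ a * o := by
    have := Nat.lt_two_pow_self (n := a)
    have := Nat.le_mul_of_pos_right (2 ^ a) ho.pos
    omega
  calc 2 ^ (t + 1) ∣ 2 ^ (a + 1) * m.choose (2 ^ a * o) := by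
        rw [pow_succ, pow_succ, mul_right_comm, mul_comm (2 ^ a)]
        exact mul_dvd_mul_right hdvd 2
    _ ∣ 2 ^ (2 ^ a * o) * m.choose (2 ^ a * o) := mul_dvd_mul_right (pow_dvd_pow 2 ha) _

theorem Nat.choose_succ_two_add_choose_two (m : ℕ) : (m + 1).choose 2 + m.choose 2 = m ^ 2 := by
  induction m with
  | zero => rfl
  | succ m ih =>
    have h : ∀ n, (n + 1).choose 2 = n + n.choose 2 := fun n => by
      rw [Nat.choose_succ_succ, Nat.choose_one_right]
    rw [h (m + 1), h m] at *
    nlinarith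

theorem Finset.sum_range_add_two_eq {M : Type*} [AddCommMonoid M] (f : ℕ → M) {m : ℕ}
    (hm : 3 ≤ m) :
    ∑ j ∈ range (m + 2), f j = f 0 + f 1 + f 2 + ∑ j ∈ Icc 3 (m - 1), f j + f m + f (m + 1) := by
  rw [sum_range_succ, sum_range_succ, range_eq_Ico, ← sum_Ico_consecutive f (Nat.zero_le 3) hm,
    ← Ico_add_one_right_eq_Icc, Nat.sub_add_cancel (by omega : 1 ≤ m)]
  simp [sum_range_succ, add_assoc]

section CommRing

variable {R : Type*} [CommRing R]

/-- The polynomial `K(X, Y)` for `r = m + 2`. -/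
def truncatedBinomialSum (m : ℕ) (x y : R) : R :=
  ∑ j ∈ Icc 3 (m - 1), ((m + 1).choose j + m.choose j : R) * x ^ (m + 2 - j) * y ^ j

theorem sum_range_choose_add_choose_mul_pow (m : ℕ) (x z : R) :
    ∑ j ∈ range (m + 2), ((m + 1).choose j + m.choose j : R) * x ^ (m + 2 - j) * z ^ j
      = x * (x + z) ^ (m + 1) + x ^ 2 * (x + z) ^ m := by
  have hsucc : ∑ j ∈ range (m + 2), (m.choose j : R) * x ^ (m + 2 - j) * z ^ j
      = x ^ 2 * (x + z) ^ m := by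
    rw [sum_range_succ, Nat.choose_succ_self, Nat.cast_zero, zero_mul, zero_mul, add_zero,
      add_comm x, add_pow, mul_sum]
    refine sum_congr rfl fun j hj => ?_
    rw [show m + 2 - j = m - j + 2 by grind]
    ring
  rw [← hsucc, add_comm x, add_pow, mul_sum, ← sum_add_distrib]
  refine sum_congr rfl fun j hj => ?_
  rw [show m + 2 - j = m + 1 - j + 1 by grind]
  ring

section TwoPowTorsion

variable {t m : ℕ} (h2 : (2 : R) ^ (t + 1) = 0) (hm : 2 ^ t ∣ m)
include h2

theorem natCast_eq_zero_of_two_pow_dvd {a : ℕ} (ha : 2 ^ (t + 1) ∣ a) : (a : R) = 0 := by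
  obtain ⟨c, rfl⟩ := ha
  rw [Nat.cast_mul, Nat.cast_pow, Nat.cast_ofNat, h2, zero_mul]

include hm

theorem two_pow_mul_choose_eq_zero {k l : ℕ} (hk : 1 ≤ k) (hkl : k ≤ l) :
    (2 : R) ^ l * m.choose k = 0 := by
  have h := natCast_eq_zero_of_two_pow_dvd h2 (Nat.two_pow_succ_dvd_two_pow_mul_choose hm hk)
  rw [Nat.cast_mul, Nat.cast_pow, Nat.cast_ofNat] at h
  rw [← Nat.sub_add_cancel hkl, pow_add, mul_assoc, h, mul_zero]

theorem two_pow_mul_choose_succ_eq_zero {k l : ℕ} (hk : 2 ≤ k) (hkl : k ≤ l) :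
    (2 : R) ^ l * (m + 1).choose k = 0 := by
  obtain ⟨k, rfl⟩ : ∃ k', k = k' + 1 := ⟨k - 1, by omega⟩
  rw [Nat.choose_succ_succ, Nat.cast_add, mul_add,
    two_pow_mul_choose_eq_zero h2 hm (by omega) (by omega),
    two_pow_mul_choose_eq_zero h2 hm le_add_self hkl, add_zero]

theorem add_two_mul_pow (x y : R) : (x + 2 * y) ^ m = x ^ m := by
  rw [add_comm, add_pow, sum_range_succ', sum_eq_zero, zero_add]
  · simp
  · intro k _
    linear_combination (y ^ (k + 1) * x ^ (m - (k + 1))) *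
      two_pow_mul_choose_eq_zero h2 hm le_add_self le_rfl

theorem add_two_mul_pow_succ (x y : R) :
    (x + 2 * y) ^ (m + 1) = x ^ (m + 1) + 2 * (m + 1) * x ^ m * y := by
  rw [add_comm, add_pow, sum_range_succ', sum_range_succ', sum_eq_zero, zero_add]
  · simp only [zero_add, pow_one, add_tsub_cancel_right, Nat.choose_one_right, Nat.cast_add,
      Nat.cast_one, pow_zero, tsub_zero, one_mul, Nat.choose_zero_right, mul_one]
    ring
  · intro k _
    linear_combination (y ^ (k + 2) * x ^ (m + 1 - (k + 2))) *
      two_pow_mul_choose_succ_eq_zero h2 hm le_add_self le_rfl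

theorem truncatedBinomialSum_two_mul_right (x y : R) : truncatedBinomialSum m x (2 * y) = 0 := by
  refine sum_eq_zero fun j hj => ?_
  have hj := mem_Icc.1 hj
  linear_combination (x ^ (m + 2 - j) * y ^ j) *
    (two_pow_mul_choose_succ_eq_zero h2 hm (k := j) (by omega) le_rfl +
      two_pow_mul_choose_eq_zero h2 hm (k := j) (by omega) le_rfl)

theorem truncatedBinomialSum_two_mul_left (x y : R) : truncatedBinomialSum m (2 * x) y = 0 := by
  refine sum_eq_zero fun j hj => ?_
  have hj := mem_Icc.1 hj
  rw [← Nat.choose_symm (n := m + 1) (by omega), ← Nat.choose_symm (n := m) (by omega)]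
  linear_combination (x ^ (m + 2 - j) * y ^ j) *
    (two_pow_mul_choose_succ_eq_zero h2 hm (k := m + 1 - j) (l := m + 2 - j) (by omega) (by omega) +
      two_pow_mul_choose_eq_zero h2 hm (k := m - j) (l := m + 2 - j) (by omega) (by omega))

theorem truncatedBinomialSum_two_mul_sub (hm3 : 3 ≤ m) (heven : Even m) (x y : R) :
    truncatedBinomialSum m x (2 * y - x) = -((m + 2) * x ^ (m + 2)) - 4 * x ^ (m + 1) * y := by
  have htm : t + 1 ≤ m := (Nat.lt_two_pow_self).trans_le (Nat.le_of_dvd (by omega) hm)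
  have hfull := sum_range_choose_add_choose_mul_pow m x (2 * y - x)
  rw [show x + (2 * y - x) = 2 * y by ring, mul_pow, mul_pow, pow_eq_zero_of_le htm h2,
    pow_eq_zero_of_le (htm.trans le_self_add) h2, sum_range_add_two_eq _ hm3] at hfull
  simp only [Nat.choose_zero_right, Nat.choose_one_right, Nat.choose_succ_self_right,
    Nat.choose_self, Nat.choose_succ_self, Nat.cast_zero, Nat.cast_one, Nat.cast_add, tsub_zero,
    Nat.add_one_sub_one, add_tsub_cancel_right, add_tsub_cancel_left, Nat.reduceSubDiff, pow_zero,
    pow_one, add_zero] at hfull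
  have hzm : (2 * y - x) ^ m = x ^ m := by
    rw [sub_eq_neg_add, add_two_mul_pow h2 hm, heven.neg_pow]
  have hzm1 : (2 * y - x) ^ (m + 1) = -x ^ (m + 1) + 2 * (m + 1) * x ^ m * y := by
    rw [sub_eq_neg_add, add_two_mul_pow_succ h2 hm, heven.add_one.neg_pow, heven.neg_pow]
  have h2m : (2 * m : R) = 0 := by
    exact_mod_cast natCast_eq_zero_of_two_pow_dvd h2
      (by rw [pow_succ, mul_comm]; exact mul_dvd_mul_left 2 hm)
  have hsq : ((m + 1).choose 2 + m.choose 2 : R) = 0 := by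
    exact_mod_cast natCast_eq_zero_of_two_pow_dvd h2
      (by rw [Nat.choose_succ_two_add_choose_two, pow_succ, sq]; exact mul_dvd_mul hm heven.two_dvd)
  unfold truncatedBinomialSum
  linear_combination hfull - (m + 2) * x ^ 2 * hzm - x * hzm1
    + (x ^ (m + 2) - 3 * x ^ (m + 1) * y) * h2m - x ^ m * (2 * y - x) ^ 2 * hsq

end TwoPowTorsion

end CommRing

/-- Let `r ≥ 6` be even, `t = v(r-2)`, and
`K(X,Y) = Σ_{j=3}^{r-3} [C(r-1,j) + C(r-2,j)] X^(r-j)Y^j`. Then modulo `2^(t+1)`: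
`K(X,2Y) ≡ 0`, `K(2X,Y) ≡ 0`, and `K(X, 2Y-X) ≡ -rX^r - 4X^(r-1)Y`,
all coefficientwise. -/
theorem stmt_17 (r : ℕ) (hr : 6 ≤ r) (heven : Even r) :
    (∃ Q : MvPolynomial (Fin 2) ℤ,
      ∑ j ∈ Finset.Icc 3 (r - 3),
          C (((r - 1).choose j : ℤ) + ((r - 2).choose j : ℤ)) * X 0 ^ (r - j) * (2 * X 1) ^ j
        = C ((2 : ℤ) ^ (padicValNat 2 (r - 2) + 1)) * Q)
    ∧ (∃ Q : MvPolynomial (Fin 2) ℤ,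
      ∑ j ∈ Finset.Icc 3 (r - 3),
          C (((r - 1).choose j : ℤ) + ((r - 2).choose j : ℤ)) * (2 * X 0) ^ (r - j) * X 1 ^ j
        = C ((2 : ℤ) ^ (padicValNat 2 (r - 2) + 1)) * Q)
    ∧ (∃ Q : MvPolynomial (Fin 2) ℤ,
      ∑ j ∈ Finset.Icc 3 (r - 3),
          C (((r - 1).choose j : ℤ) + ((r - 2).choose j : ℤ)) * X 0 ^ (r - j) * (2 * X 1 - X 0) ^ j
        = -(C ((r : ℤ)) * X 0 ^ r) - C (4 : ℤ) * X 0 ^ (r - 1) * X 1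
          + C ((2 : ℤ) ^ (padicValNat 2 (r - 2) + 1)) * Q) := by
  obtain ⟨m, rfl⟩ : ∃ m, r = m + 2 := ⟨r - 2, by omega⟩
  have hm : Even m := (Nat.even_add.1 heven).2 even_two
  simp only [Nat.add_sub_cancel, show m + 2 - 1 = m + 1 by omega,
    show m + 2 - 3 = m - 1 by omega]
  set c : MvPolynomial (Fin 2) ℤ := C ((2 : ℤ) ^ (padicValNat 2 m + 1))
  let π := Ideal.Quotient.mk (Ideal.span {c})
  have h2 : (2 : MvPolynomial (Fin 2) ℤ ⧸ Ideal.span {c}) ^ (padicValNat 2 m + 1) = 0 := by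
    simpa [c, map_ofNat] using (Ideal.Quotient.eq_zero_iff_dvd c c).2 dvd_rfl
  have hdvd : 2 ^ padicValNat 2 m ∣ m := pow_padicValNat_dvd
  have lift : ∀ a b, π a = π b → ∃ Q, a = b + c * Q := fun a b h => by
    obtain ⟨Q, hQ⟩ := Ideal.mem_span_singleton.1 (Ideal.Quotient.eq.1 h)
    exact ⟨Q, by rw [← hQ]; ring⟩
  have lift_zero : ∀ a, π a = 0 → ∃ Q, a = c * Q := fun a h => by
    simpa using lift a 0 (by rw [h, map_zero])
  have hπ : ∀ x y, π (∑ j ∈ Icc 3 (m - 1), C (((m + 1).choose j : ℤ) + (m.choose j : ℤ)) *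
      x ^ (m + 2 - j) * y ^ j) = truncatedBinomialSum m (π x) (π y) := by
    intro x y
    simp [truncatedBinomialSum, map_sum]
  refine ⟨lift_zero _ ?_, lift_zero _ ?_, lift _ _ ?_⟩
  · rw [hπ, map_mul, map_ofNat π 2, truncatedBinomialSum_two_mul_right h2 hdvd]
  · rw [hπ, map_mul, map_ofNat π 2, truncatedBinomialSum_two_mul_left h2 hdvd]
  · rw [hπ, map_sub, map_mul, map_ofNat π 2,
      truncatedBinomialSum_two_mul_sub h2 hdvd (by omega) hm]
    simp only [map_sub, map_neg, map_mul, map_add, map_pow, map_natCast, map_ofNat π, eq_intCast,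
      Int.cast_ofNat, Nat.cast_add, Nat.cast_ofNat]
end

section
/- Let a₂ ∈ Q̄₂ with 0 < v(a₂) < 1, let r ≥ 2 be an integer, set α' = (a₂² - 2r²)/(2a₂), τ' = v(α'), and t = v(r-1). If τ' ≥ t, then r is odd and v(a₂) = 1/2. -/
/-!
Write `s = v(a₂)`. Since `v(r - 1) ≥ 0`, the hypothesis gives
`v(a₂² - 2r²) ≥ v(2a₂) = 1 + s > 2s = v(a₂²)`, so the ultrametric inequality forces
`1 + 2 v(r) = v(2r²) = v(a₂²) = 2s < 2`. Hence `v(r) < 1/2`: `r` cannot be even (then `v(r) ≥ 1`),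
so `r` is odd, `v(r) = 0` and `s = 1/2`.
-/

namespace AddValuation

section Ring

variable {R Γ₀ : Type*} [Ring R] [LinearOrderedAddCommMonoidWithTop Γ₀] (v : AddValuation R Γ₀)

lemma natCast_nonneg (n : ℕ) : 0 ≤ v n := by
  induction n with
  | zero => simp
  | succ n ih => exact_mod_cast v.map_le_add ih v.map_one.ge

lemma map_two_le_natCast_of_even {n : ℕ} (hn : Even n) : v 2 ≤ v n := by
  obtain ⟨m, rfl⟩ := hn.two_dvd
  rw [Nat.cast_mul, Nat.cast_two, v.map_mul]
  exact le_add_of_nonneg_right (v.natCast_nonneg m)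

lemma natCast_eq_zero_of_odd (h2 : 0 < v 2) {n : ℕ} (hn : Odd n) : v n = 0 := by
  obtain ⟨m, rfl⟩ := hn
  have hlt : v 1 < v (2 * m) := by
    rw [v.map_one, v.map_mul]
    exact lt_add_of_lt_of_nonneg h2 (v.natCast_nonneg m)
  rw [Nat.cast_add, Nat.cast_mul, Nat.cast_ofNat, Nat.cast_one, add_comm,
    v.map_add_eq_of_lt_left hlt, v.map_one]

end Ring

section Field

variable {K Γ₀ : Type*} [Field K] [LinearOrderedAddCommMonoidWithTop Γ₀] (v : AddValuation K Γ₀)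

lemma map_le_of_map_div_nonneg {x y : K} (hy : y ≠ 0) (h : 0 ≤ v (x / y)) : v y ≤ v x := by
  rw [← div_mul_cancel₀ x hy, v.map_mul]
  exact le_add_of_nonneg_left h

end Field

variable {K : Type*} [Field K] (v : AddValuation K (WithTop ℚ))

lemma map_two_mul_sq_eq_map_sq_of_le (hv2 : v 2 = 1) {a : K} (h1 : v a < 1) {r : ℕ}
    (h : v ((r : K) - 1) ≤ v ((a ^ 2 - 2 * (r : K) ^ 2) / (2 * a))) :
    v (2 * (r : K) ^ 2) = v (a ^ 2) := by
  have ha : v a ≠ ⊤ := h1.ne_top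
  have h2a : v (2 * a) = 1 + v a := by rw [v.map_mul, hv2]
  have hsub : 0 ≤ v ((r : K) - 1) :=
    (le_min (v.natCast_nonneg r) v.map_one.ge).trans (v.map_sub _ _)
  have hD : v (2 * a) ≤ v (a ^ 2 - 2 * (r : K) ^ 2) :=
    v.map_le_of_map_div_nonneg (by simp [v.ne_top_iff.symm, h2a, ha]) (hsub.trans h)
  have hsq : v (a ^ 2) < v (2 * a) := by
    rw [pow_two, v.map_mul, h2a]
    exact WithTop.add_lt_add_right ha h1
  exact v.map_eq_of_lt_sub (by rw [v.map_sub_swap]; exact hsq.trans_le hD)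

theorem odd_and_map_eq_half_of_le (hv2 : v 2 = 1) {a : K} (h1 : v a < 1)
    {r : ℕ} (h : v ((r : K) - 1) ≤ v ((a ^ 2 - 2 * (r : K) ^ 2) / (2 * a))) :
    Odd r ∧ v a = ((1 / 2 : ℚ) : WithTop ℚ) := by
  have hr : 1 + (v r + v r) = v a + v a := by
    simpa only [v.map_mul, hv2, pow_two] using v.map_two_mul_sq_eq_map_sq_of_le hv2 h1 h
  obtain ⟨s, hs⟩ := WithTop.ne_top_iff_exists.mp h1.ne_top
  have hr_top : v r ≠ ⊤ := by
    rintro hr'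
    rw [hr', WithTop.add_top, WithTop.add_top, ← hs] at hr
    exact WithTop.coe_ne_top hr.symm
  obtain ⟨ρ, hρ⟩ := WithTop.ne_top_iff_exists.mp hr_top
  rw [← hs] at h1 ⊢
  rw [← hs, ← hρ] at hr
  have hs1 : s < 1 := by exact_mod_cast h1
  have hsρ : 1 + (ρ + ρ) = s + s := by exact_mod_cast hr
  rcases Nat.even_or_odd r with he | ho
  · have hρ1 : (1 : WithTop ℚ) ≤ ρ := hρ ▸ hv2 ▸ v.map_two_le_natCast_of_even he
    have : (1 : ℚ) ≤ ρ := by exact_mod_cast hρ1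
    linarith
  · have : ρ = 0 := by exact_mod_cast hρ.trans (v.natCast_eq_zero_of_odd (by simp [hv2]) ho)
    exact ⟨ho, by congr 1; linarith⟩

end AddValuation

lemma map_one_eq_zero_of_map_mul {M G : Type*} [MulZeroOneClass M] [Nontrivial M]
    [AddCancelMonoid G] {v : M → WithTop G}
    (hv_top : ∀ x : M, v x = ⊤ ↔ x = 0) (hv_mul : ∀ x y : M, v (x * y) = v x + v y) :
    v 1 = 0 := by
  have h1 : v 1 ≠ ⊤ := fun h => one_ne_zero ((hv_top 1).mp h)
  have h := hv_mul 1 1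
  rw [one_mul] at h
  exact WithTop.add_right_cancel h1 (by rw [zero_add]; exact h.symm)

theorem stmt_18_general (K : Type*) [Field K]
    (v : K → WithTop ℚ)
    (hv_top : ∀ x : K, v x = ⊤ ↔ x = 0)
    (hv_mul : ∀ x y : K, v (x * y) = v x + v y)
    (hv_add : ∀ x y : K, min (v x) (v y) ≤ v (x + y))
    (hv_two : v 2 = 1)
    (a₂ : K) (h1 : v a₂ < 1)
    (r : ℕ)
    (hτt : v ((r : K) - 1) ≤ v ((a₂ ^ 2 - 2 * (r : K) ^ 2) / (2 * a₂))) :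
    Odd r ∧ v a₂ = ((1 / 2 : ℚ) : WithTop ℚ) :=
  (AddValuation.of v ((hv_top 0).2 rfl) (map_one_eq_zero_of_map_mul hv_top hv_mul) hv_add
    hv_mul).odd_and_map_eq_half_of_le hv_two h1 hτt

/-- Let `a₂ ∈ Q̄₂` with `0 < v(a₂) < 1` (`v` the 2-adic valuation normalized by
`v(2) = 1`, with `v(0) = ⊤`), let `r ≥ 2`, set `α' = (a₂² - 2r²)/(2a₂)`,
`τ' = v(α')` and `t = v(r-1)`. If `τ' ≥ t`, then `r` is odd and `v(a₂) = 1/2`.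
Here `Q̄₂` is modeled by a characteristic-zero field `K` equipped with an additive
valuation `v : K → WithTop ℚ` satisfying the valuation axioms and `v(2) = 1`. -/
theorem stmt_18 (K : Type*) [Field K] [CharZero K]
    (v : K → WithTop ℚ)
    (hv_top : ∀ x : K, v x = ⊤ ↔ x = 0)
    (hv_mul : ∀ x y : K, v (x * y) = v x + v y)
    (hv_add : ∀ x y : K, min (v x) (v y) ≤ v (x + y))
    (hv_two : v 2 = 1)
    (a₂ : K) (h0 : 0 < v a₂) (h1 : v a₂ < 1)
    (r : ℕ) (hr : 2 ≤ r)
    (hτt : v ((r : K) - 1) ≤ v ((a₂ ^ 2 - 2 * (r : K) ^ 2) / (2 * a₂))) :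
    Odd r ∧ v a₂ = ((1 / 2 : ℚ) : WithTop ℚ) :=
  stmt_18_general K v hv_top hv_mul hv_add hv_two a₂ h1 r hτt
end

section
/- Let v(a₂) = 1, r ≥ 3, α = (a₂² - 4·C(r,2))/(2a₂), τ = v(α), t = v(r-2), and β₀ = α if τ ≤ t-1, β₀ = (r-2)/2 if τ > t-1 (so v(β₀) = min(τ, t-1)). Then c₁ = (a₂² - 2r)/(a₂²β₀) is integral (v(c₁) ≥ 0), and c₁ ≡ 2/a₂ mod the maximal ideal of Z̄₂ when τ ≤ t-1, while c₁ ≡ 4r/a₂² mod the maximal ideal when τ > t-1. -/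
/-! Put `X = 2a₂α` and `Y = 2r(r-2)`. Since `4·C(r,2) = 2r(r-1)`, the numerator of `c₁` is
`a₂² - 2r = X + Y`, and `X = a₂² - 4·C(r,2)` has valuation `τ + 2 ≥ 2`, so `τ ≥ 0`.
If `τ + 1 ≤ t`, then `v r ≥ 1` and `v Y ≥ τ + 3 > v X = v(a₂²α)`, so `c₁` is a unit and
`c₁ - 2/a₂ = Y/(a₂²α)` lies in the maximal ideal. If `t < τ + 1`, both `X` and `Y` have valuation
at least `t + 1 = v(a₂²β₀)`, and `c₁ - 4r/a₂² = 4α/(a₂(r-2))` has valuation `τ + 1 - t > 0`. -/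

namespace AddValuation

variable {R K Γ₀ : Type*}

theorem map_natCast_nonneg [Ring R] [LinearOrderedAddCommMonoidWithTop Γ₀]
    (v : AddValuation R Γ₀) (n : ℕ) : 0 ≤ v n := by
  induction n with
  | zero => simp
  | succ n ih => push_cast; exact v.map_le_add ih v.map_one.ge

variable [Field K] [LinearOrderedAddCommGroupWithTop Γ₀] (v : AddValuation K Γ₀) {x y : K}

theorem map_div_nonneg (h : v y ≤ v x) : 0 ≤ v (x / y) := by
  rw [v.map_div]
  rcases eq_or_ne (v y) ⊤ with hy | hy
  · simp [hy]
  · exact LinearOrderedAddCommGroupWithTop.sub_self_nonneg.trans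
      ((LinearOrderedAddCommGroupWithTop.sub_le_sub_iff_left_of_ne_top hy).2 h)

theorem map_div_pos (h : v y < v x) : 0 < v (x / y) := by
  rw [v.map_div]
  exact LinearOrderedAddCommGroupWithTop.sub_pos.2 (Or.inl h)

end AddValuation

section

variable {K : Type*} [Field K] (v : AddValuation K (WithTop ℚ)) {a α : K} {r : ℕ}

theorem two_mul_mul_eq_of_eq_div [NeZero (2 : K)] (ha : a ≠ 0)
    (hα : α = (a ^ 2 - 4 * r.choose 2) / (2 * a)) :
    2 * a * α = a ^ 2 - 4 * r.choose 2 := by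
  rw [hα]
  field_simp

theorem sq_sub_two_mul_natCast_eq [NeZero (2 : K)] (ha : a ≠ 0)
    (hα : α = (a ^ 2 - 4 * r.choose 2) / (2 * a)) :
    a ^ 2 - 2 * r = 2 * a * α + 2 * r * (r - 2) := by
  rw [two_mul_mul_eq_of_eq_div ha hα, Nat.cast_choose_two]
  field_simp
  ring

theorem val_sq_of_val_eq_one {x : K} (hx : v x = 1) : v (x ^ 2) = 2 := by
  rw [v.map_pow, hx]
  norm_num

theorem val_alpha_nonneg [NeZero (2 : K)] (hv2 : v 2 = 1) (ha : v a = 1)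
    (hα : α = (a ^ 2 - 4 * r.choose 2) / (2 * a)) : 0 ≤ v α := by
  have ha0 : a ≠ 0 := v.ne_top_iff.1 (by simp [ha])
  have h4 : 2 ≤ v (4 * r.choose 2 : K) := by
    rw [show (4 : K) = 2 ^ 2 by norm_num, v.map_mul, val_sq_of_val_eq_one v hv2]
    exact le_add_of_nonneg_right (v.map_natCast_nonneg _)
  have : 2 + 0 ≤ 2 + v α := calc
    2 + 0 = v (a ^ 2) := by rw [val_sq_of_val_eq_one v ha, add_zero]
    _ ≤ v (a ^ 2 - 4 * r.choose 2) := v.map_le_sub le_rfl (by rwa [val_sq_of_val_eq_one v ha])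
    _ = 2 + v α := by
      rw [← two_mul_mul_eq_of_eq_div ha0 hα, v.map_mul, v.map_mul, hv2, ha, one_add_one_eq_two]
  exact WithTop.le_of_add_le_add_left (by simp) this

theorem val_nonneg_and_val_sub_two_div_pos [NeZero (2 : K)] (hv2 : v 2 = 1) (ha : v a = 1)
    (hα : α = (a ^ 2 - 4 * r.choose 2) / (2 * a)) (hr2 : (r : K) ≠ 2)
    (hτ : v α + 1 ≤ v ((r : K) - 2)) :
    0 ≤ v ((a ^ 2 - 2 * r) / (a ^ 2 * α)) ∧
      0 < v ((a ^ 2 - 2 * r) / (a ^ 2 * α) - 2 / a) := by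
  have ha0 : a ≠ 0 := v.ne_top_iff.1 (by simp [ha])
  have hα0 : α ≠ 0 := by
    rintro rfl
    exact sub_ne_zero.2 hr2 (v.top_iff.1 (top_le_iff.1 (by simpa using hτ)))
  have hτ0 := val_alpha_nonneg v hv2 ha hα
  obtain ⟨τ, hτq⟩ := WithTop.ne_top_iff_exists.1 (v.ne_top_iff.2 hα0)
  have hX : v (2 * a * α) = v (a ^ 2 * α) := by
    rw [v.map_mul, v.map_mul (a ^ 2), v.map_mul, val_sq_of_val_eq_one v ha, hv2, ha,
      one_add_one_eq_two]
  have hr : 1 ≤ v (r : K) := by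
    rw [← sub_add_cancel (r : K) 2]
    refine v.map_le_add (le_trans ?_ hτ) hv2.ge
    exact le_add_of_nonneg_left hτ0
  have hXY : v (2 * a * α) < v (2 * r * (r - 2) : K) := calc
    v (2 * a * α) = 2 + τ := by rw [hX, v.map_mul, val_sq_of_val_eq_one v ha, ← hτq]
    _ < 1 + 1 + ((τ : WithTop ℚ) + 1) := by
      simpa using WithTop.coe_lt_coe.2 (by linarith : 2 + τ < 1 + 1 + (τ + 1))
    _ ≤ v (2 * r * (r - 2) : K) := by
      rw [v.map_mul, v.map_mul, hv2, hτq]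
      gcongr
  refine ⟨v.map_div_nonneg ?_, ?_⟩
  · rw [sq_sub_two_mul_natCast_eq ha0 hα, v.map_add_eq_of_lt_left hXY, hX]
  · have : (a ^ 2 - 2 * r) / (a ^ 2 * α) - 2 / a = 2 * r * (r - 2) / (a ^ 2 * α) := by
      rw [sq_sub_two_mul_natCast_eq ha0 hα]
      field_simp
      ring
    exact this ▸ v.map_div_pos (hX ▸ hXY)

theorem val_nonneg_and_val_sub_four_mul_div_pos [NeZero (2 : K)] (hv2 : v 2 = 1) (ha : v a = 1)
    (hα : α = (a ^ 2 - 4 * r.choose 2) / (2 * a)) (hr2 : (r : K) ≠ 2)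
    (ht : v ((r : K) - 2) < v α + 1) :
    0 ≤ v ((a ^ 2 - 2 * r) / (a ^ 2 * ((r - 2) / 2))) ∧
      0 < v ((a ^ 2 - 2 * r) / (a ^ 2 * ((r - 2) / 2)) - 4 * r / a ^ 2) := by
  have ha0 : a ≠ 0 := v.ne_top_iff.1 (by simp [ha])
  have hc : (a ^ 2 - 2 * r) / (a ^ 2 * ((r - 2) / 2)) =
      (2 * (2 * a * α) + 4 * r * (r - 2)) / (a ^ 2 * (r - 2)) := by
    rw [sq_sub_two_mul_natCast_eq ha0 hα]
    field_simp
    ring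
  have hd : (a ^ 2 - 2 * r) / (a ^ 2 * ((r - 2) / 2)) - 4 * r / a ^ 2 =
      4 * α / (a * (r - 2)) := by
    rw [sq_sub_two_mul_natCast_eq ha0 hα]
    field_simp
    ring
  have hden : v (a ^ 2 * (r - 2) : K) = 2 + v ((r : K) - 2) := by
    rw [v.map_mul, val_sq_of_val_eq_one v ha]
  refine ⟨hc ▸ v.map_div_nonneg ?_, hd ▸ v.map_div_pos ?_⟩
  · rw [hden]
    refine v.map_le_add ?_ ?_
    · calc 2 + v ((r : K) - 2) ≤ 2 + (v α + 1) := by gcongr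
        _ = v (2 * (2 * a * α)) := by
          rw [v.map_mul, v.map_mul, v.map_mul, hv2, ha, ← one_add_one_eq_two]
          ac_rfl
    · rw [v.map_mul, show (4 : K) * r = 2 ^ 2 * r by norm_num, v.map_mul,
        val_sq_of_val_eq_one v hv2]
      gcongr
      exact le_add_of_nonneg_right (v.map_natCast_nonneg _)
  · rw [v.map_mul, v.map_mul, ha, show (4 : K) = 2 ^ 2 by norm_num, val_sq_of_val_eq_one v hv2]
    calc 1 + v ((r : K) - 2) < 1 + (v α + 1) := WithTop.add_lt_add_left (by simp) ht
      _ = 2 + v α := by rw [add_comm (v α), ← add_assoc, one_add_one_eq_two]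

end

/-- Let `v(a₂) = 1`, `r ≥ 3`, `α = (a₂² - 4·C(r,2))/(2a₂)`, `τ = v(α)`,
`t = v(r-2)`, and `β₀ = α` if `τ ≤ t - 1` (equivalently `τ + 1 ≤ t`), else
`β₀ = (r-2)/2`. Then `c₁ = (a₂² - 2r)/(a₂²β₀)` is integral (`v(c₁) ≥ 0`), and
`c₁ ≡ 2/a₂` mod the maximal ideal of `Z̄₂` when `τ ≤ t - 1`, while
`c₁ ≡ 4r/a₂²` mod the maximal ideal when `τ > t - 1`. Here `Q̄₂` is modeled by a
characteristic-zero field `K` with an additive valuation `v : K → WithTop ℚ`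
normalized by `v(2) = 1` (and `v(0) = ⊤`); membership in the maximal ideal of the
valuation ring means having strictly positive valuation. -/
theorem stmt_19 (K : Type*) [Field K] [CharZero K]
    (v : K → WithTop ℚ)
    (hv_top : ∀ x : K, v x = ⊤ ↔ x = 0)
    (hv_mul : ∀ x y : K, v (x * y) = v x + v y)
    (hv_add : ∀ x y : K, min (v x) (v y) ≤ v (x + y))
    (hv_two : v 2 = 1)
    (a₂ : K) (ha : v a₂ = 1)
    (r : ℕ) (hr : 3 ≤ r)
    (α β₀ c₁ : K)
    (hα : α = (a₂ ^ 2 - 4 * (r.choose 2 : K)) / (2 * a₂))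
    (hβ₀ : β₀ = if v α + 1 ≤ v ((r : K) - 2) then α else ((r : K) - 2) / 2)
    (hc₁ : c₁ = (a₂ ^ 2 - 2 * (r : K)) / (a₂ ^ 2 * β₀)) :
    0 ≤ v c₁
    ∧ (v α + 1 ≤ v ((r : K) - 2) → 0 < v (c₁ - 2 / a₂))
    ∧ (¬ v α + 1 ≤ v ((r : K) - 2) → 0 < v (c₁ - 4 * (r : K) / a₂ ^ 2)) := by
  have hv_one : v 1 = 0 := by
    have h : v 1 + v 1 = v 1 + 0 := by rw [add_zero, ← hv_mul, one_mul]
    exact WithTop.add_left_cancel (fun h1 => one_ne_zero ((hv_top 1).1 h1)) h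
  let w : AddValuation K (WithTop ℚ) := .of v ((hv_top 0).2 rfl) hv_one hv_add hv_mul
  have hr2 : (r : K) ≠ 2 := by exact_mod_cast (by omega : r ≠ 2)
  split_ifs at hβ₀ with hτ <;> subst hβ₀ hc₁
  · obtain ⟨h₁, h₂⟩ := val_nonneg_and_val_sub_two_div_pos w hv_two ha hα hr2 hτ
    exact ⟨h₁, fun _ => h₂, absurd hτ⟩
  · obtain ⟨h₁, h₂⟩ := val_nonneg_and_val_sub_four_mul_div_pos w hv_two ha hα hr2 (not_le.1 hτ)
    exact ⟨h₁, (absurd · hτ), fun _ => h₂⟩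
end
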